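/- arXiv:1011.4544 — 6 statements merged into one kernel-verified Lean document; each statement's English description precedes it below -/
import Mathlib

section
/- Let Φ : C → D be an exact (triangulated) functor between triangulated categories. Assume that for every object C of C, every object D of D, and every morphism f : D → Φ(C) in D, there exist an object C' of C, a morphism g : C' → C in C, and an isomorphism α : Φ(C') → D in D such that Φ(g) = f ∘ α. Let N = ker(Φ) denote the full triangulated subcategory of C consisting of objects X with Φ(X) ≅ 0. Then the functor C/N → D induced by Φ on the Verdier quotient C/N is an equivalence of triangulated categories. (In particular, any functor Φ' : C' → D satisfying Φ' ∘ L ≅ Φ, where L : C → C' is a localization functor inverting the morphisms whose cone lies in N, is an equivalence.) -/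
open CategoryTheory Limits Pretriangulated ZeroObject

/-- Criterion for an exact functor to induce an equivalence on a Verdier quotient.
Let `Φ : C ⥤ D` be an exact (triangulated) functor between (pre)triangulated
categories such that every morphism `f : Y ⟶ Φ X` in `D` lifts, up to an isomorphism
`α : Φ X' ≅ Y`, to a morphism `g : X' ⟶ X` in `C` with `Φ g = α.hom ≫ f`.
Let `N` be the triangulated subcategory of `C` consisting of the objects killed
by `Φ` (the kernel of `Φ`). Then any functor `Φ' : C' ⥤ D` with `L ⋙ Φ' ≅ Φ`,
where `L : C ⥤ C'` is a localization functor with respect to the class `N.trW` of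
morphisms whose cone lies in `N`, is an equivalence of categories. -/
theorem stmt_0 {C D C' : Type*} [Category C] [Category D] [Category C']
    [HasZeroObject C] [HasShift C ℤ] [Preadditive C]
    [∀ n : ℤ, (CategoryTheory.shiftFunctor C n).Additive] [Pretriangulated C]
    [HasZeroObject D] [HasShift D ℤ] [Preadditive D]
    [∀ n : ℤ, (CategoryTheory.shiftFunctor D n).Additive] [Pretriangulated D]
    (Φ : C ⥤ D) [Φ.Additive] [Φ.CommShift ℤ] [Φ.IsTriangulated]
    (hlift : ∀ (X : C) (Y : D) (f : Y ⟶ Φ.obj X),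
      ∃ (X' : C) (g : X' ⟶ X) (α : Φ.obj X' ≅ Y), Φ.map g = α.hom ≫ f)
    (N : ObjectProperty C) [N.IsTriangulated]
    (hN : ∀ X : C, N X ↔ IsZero (Φ.obj X))
    (L : C ⥤ C') [L.IsLocalization N.trW]
    (Φ' : C' ⥤ D) (e : L ⋙ Φ' ≅ Φ) :
    Φ'.IsEquivalence := by
  -- A morphism lies in `N.trW` iff `Φ` sends it to an isomorphism.
  have hW : ∀ ⦃X Y : C⦄ (f : X ⟶ Y), N.trW f ↔ IsIso (Φ.map f) := by
    intro X Y f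
    constructor
    · rintro ⟨Z, g, h, mem, memP⟩
      exact (Triangle.isZero₃_iff_isIso₁ _ (Φ.map_distinguished _ mem)).1 ((hN Z).1 memP)
    · intro hf
      obtain ⟨Z, g, h, mem⟩ := distinguished_cocone_triangle f
      exact ⟨Z, g, h, mem,
        (hN Z).2 (Triangle.isZero₃_of_isIso₁ _ (Φ.map_distinguished _ mem) hf)⟩
  haveI : N.trW.IsStableUnderComposition := ⟨fun f g hf hg => by
    rw [hW] at hf hg ⊢
    rw [Φ.map_comp]
    exact IsIso.comp_isIso' hf hg⟩
  haveI : N.trW.IsMultiplicative := { }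
  haveI : N.trW.HasLeftCalculusOfFractions := {
    exists_leftFraction := fun X Y φ => by
      obtain ⟨Z, f, g, H, mem⟩ := φ.hs
      obtain ⟨Y', s', f', mem'⟩ := distinguished_cocone_triangle₂ (g ≫ φ.f⟦(1 : ℤ)⟧')
      obtain ⟨b, ⟨hb₁, _⟩⟩ :=
        complete_distinguished_triangle_morphism₂ _ _ H mem' φ.f (𝟙 Z) (Category.id_comp _).symm
      exact ⟨MorphismProperty.LeftFraction.mk b s' ⟨_, _, _, mem', mem⟩, hb₁.symm⟩
    ext := by
      rintro X' X Y f₁ f₂ s ⟨Z, g, h, H, mem⟩ hf₁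
      have hf₂ : s ≫ (f₁ - f₂) = 0 := by rw [Preadditive.comp_sub, hf₁, sub_self]
      obtain ⟨q, hq⟩ : ∃ q : Z ⟶ Y, f₁ - f₂ = g ≫ q := Triangle.yoneda_exact₂ _ H _ hf₂
      obtain ⟨Y', r, t, mem'⟩ := distinguished_cocone_triangle q
      refine ⟨Y', r, ⟨_, _, _, rot_of_distTriang _ mem', N.le_shift 1 _ mem⟩, ?_⟩
      have eq : q ≫ r = 0 := comp_distTriang_mor_zero₁₂ _ mem'
      rw [← sub_eq_zero, ← Preadditive.sub_comp, hq, Category.assoc, eq, Limits.comp_zero] }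
  haveI : N.trW.HasRightCalculusOfFractions := {
    exists_rightFraction := fun X Y φ => by
      obtain ⟨Z, f, g, H, mem⟩ := φ.hs
      obtain ⟨X', f', h', mem'⟩ := distinguished_cocone_triangle₁ (φ.f ≫ f)
      obtain ⟨a, ⟨ha₁, _⟩⟩ := complete_distinguished_triangle_morphism₁ _ _
        mem' H φ.f (𝟙 Z) (Category.comp_id _)
      exact ⟨MorphismProperty.RightFraction.mk f' ⟨_, _, _, mem', mem⟩ a, ha₁⟩
    ext := fun Y Z Z' f₁ f₂ s hs hf₁ => by
      rw [N.trW_iff'] at hs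
      obtain ⟨Z'', g, h, H, mem⟩ := hs
      have hf₂ : (f₁ - f₂) ≫ s = 0 := by rw [Preadditive.sub_comp, hf₁, sub_self]
      obtain ⟨q, hq⟩ : ∃ q : Y ⟶ Z'', f₁ - f₂ = q ≫ g := Triangle.coyoneda_exact₂ _ H _ hf₂
      obtain ⟨Y', r, t, mem'⟩ := distinguished_cocone_triangle₁ q
      refine ⟨Y', r, ⟨_, _, _, mem', mem⟩, ?_⟩
      have eq : r ≫ q = 0 := comp_distTriang_mor_zero₁₂ _ mem'
      rw [← sub_eq_zero, ← Preadditive.comp_sub, hq, reassoc_of% eq, Limits.zero_comp] }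
  -- how `Φ'` acts on images of morphisms of `C`
  have hmap : ∀ {X Y : C} (a : X ⟶ Y),
      Φ'.map (L.map a) = e.hom.app X ≫ Φ.map a ≫ e.inv.app Y := by
    intro X Y a
    have h := e.hom.naturality a
    dsimp at h
    rw [← Category.assoc, ← h, Category.assoc, Iso.hom_inv_id_app]
    simp
  -- vanishing lemma
  have hvanish : ∀ {A B : C} (h : A ⟶ B), Φ.map h = 0 →
      ∃ (A' : C) (t : A' ⟶ A), N.trW t ∧ t ≫ h = 0 := by
    intro A B h hh
    obtain ⟨Z, w, δ, mem⟩ := distinguished_cocone_triangle₁ h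
    have memD := Φ.map_distinguished _ mem
    obtain ⟨q, hq⟩ : ∃ q : Φ.obj A ⟶ Φ.obj Z, 𝟙 (Φ.obj A) = q ≫ Φ.map w :=
      Triangle.coyoneda_exact₂ _ memD (𝟙 (Φ.obj A))
      ((Category.id_comp _).trans hh)
    obtain ⟨A', g, α, hg⟩ := hlift Z (Φ.obj A) q
    change 𝟙 (Φ.obj A) = q ≫ Φ.map w at hq
    have htiso : Φ.map (g ≫ w) = α.hom := by
      rw [Φ.map_comp, hg, Category.assoc]
      conv_rhs => rw [← Category.comp_id α.hom]
      congr 1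
      exact hq.symm
    have eq0 : w ≫ h = 0 := comp_distTriang_mor_zero₁₂ _ mem
    refine ⟨A', g ≫ w, (hW _).2 (by rw [htiso]; infer_instance), ?_⟩
    rw [Category.assoc, eq0, Limits.comp_zero]
  -- faithfulness on images of `L`
  have key : ∀ {X Y : C} (g₁ g₂ : L.obj X ⟶ L.obj Y),
      Φ'.map g₁ = Φ'.map g₂ → g₁ = g₂ := by
    intro X Y g₁ g₂ hg
    obtain ⟨φ₁, rfl⟩ := Localization.exists_leftFraction L N.trW g₁
    obtain ⟨φ₂, rfl⟩ := Localization.exists_leftFraction L N.trW g₂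
    obtain ⟨ψ, hψ⟩ := MorphismProperty.HasLeftCalculusOfFractions.exists_leftFraction
      (MorphismProperty.RightFraction.mk φ₁.s φ₁.hs φ₂.s)
    dsimp at hψ
    have hs : N.trW (φ₁.s ≫ ψ.f) := by
      rw [← hψ]
      exact N.trW.comp_mem _ _ φ₂.hs ψ.hs
    haveI : IsIso (L.map (φ₁.s ≫ ψ.f)) := Localization.inverts L N.trW _ hs
    have lhs₁ : φ₁.map L (Localization.inverts L N.trW) ≫ L.map (φ₁.s ≫ ψ.f) =
        L.map (φ₁.f ≫ ψ.f) := by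
      rw [L.map_comp, ← Category.assoc, MorphismProperty.LeftFraction.map_comp_map_s,
        ← L.map_comp]
    have lhs₂ : φ₂.map L (Localization.inverts L N.trW) ≫ L.map (φ₁.s ≫ ψ.f) =
        L.map (φ₂.f ≫ ψ.s) := by
      rw [← hψ, L.map_comp, ← Category.assoc, MorphismProperty.LeftFraction.map_comp_map_s,
        ← L.map_comp]
    rw [← cancel_mono (L.map (φ₁.s ≫ ψ.f)), lhs₁, lhs₂]
    -- deduce `Φ.map (φ₁.f ≫ ψ.f) = Φ.map (φ₂.f ≫ ψ.s)`
    have hΦeq : Φ.map (φ₁.f ≫ ψ.f) = Φ.map (φ₂.f ≫ ψ.s) := by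
      have h1 : Φ'.map (L.map (φ₁.f ≫ ψ.f)) = Φ'.map (L.map (φ₂.f ≫ ψ.s)) := by
        rw [← lhs₁, ← lhs₂, Φ'.map_comp, Φ'.map_comp, hg]
      rw [hmap, hmap] at h1
      rw [← cancel_epi (e.hom.app X), ← cancel_mono (e.inv.app ψ.Y')]
      simpa only [Category.assoc] using h1
    have hzero : Φ.map (φ₁.f ≫ ψ.f - φ₂.f ≫ ψ.s) = 0 := by
      rw [Φ.map_sub, sub_eq_zero, hΦeq]
    obtain ⟨A', t, ht, htz⟩ := hvanish _ hzero
    rw [Preadditive.comp_sub, sub_eq_zero] at htz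
    exact (MorphismProperty.map_eq_iff_precomp L N.trW _ _).2 ⟨A', t, ht, htz⟩
  haveI : L.EssSurj := Localization.essSurj L N.trW
  haveI : Φ'.Faithful := by
    refine ⟨fun {P Q} f₁ f₂ hf => ?_⟩
    have eP := L.objObjPreimageIso P
    have eQ := L.objObjPreimageIso Q
    have h := key (eP.hom ≫ f₁ ≫ eQ.inv) (eP.hom ≫ f₂ ≫ eQ.inv)
      (by simp only [Φ'.map_comp, hf])
    rw [cancel_epi eP.hom, cancel_mono eQ.inv] at h
    exact h
  haveI : Φ.PreservesZeroMorphisms := inferInstance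
  haveI : PreservesBinaryBiproducts Φ := preservesBinaryBiproducts_of_preservesBiproducts Φ
  haveI : Φ'.Full := by
    refine ⟨fun {P Q} ψ => ?_⟩
    have eP := L.objObjPreimageIso P
    have eQ := L.objObjPreimageIso Q
    set X := L.objPreimage P
    set Y := L.objPreimage Q
    set ψ' : Φ'.obj (L.obj X) ⟶ Φ'.obj (L.obj Y) :=
      Φ'.map eP.hom ≫ ψ ≫ Φ'.map eQ.inv with hψ'
    set φ : Φ.obj X ⟶ Φ.obj Y := e.inv.app X ≫ ψ' ≫ e.hom.app Y with hφ
    set f : Φ.obj X ⟶ Φ.obj (X ⊞ Y) :=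
      biprod.lift (𝟙 _) φ ≫ (Φ.mapBiprod X Y).inv with hf
    obtain ⟨X', g, α, hg⟩ := hlift (X ⊞ Y) (Φ.obj X) f
    have hfst : Φ.map (biprod.fst : X ⊞ Y ⟶ X) = (Φ.mapBiprod X Y).hom ≫ biprod.fst := by
      rw [Functor.mapBiprod_hom, biprod.lift_fst]
    have hsnd : Φ.map (biprod.snd : X ⊞ Y ⟶ Y) = (Φ.mapBiprod X Y).hom ≫ biprod.snd := by
      rw [Functor.mapBiprod_hom, biprod.lift_snd]
    have ht : Φ.map (g ≫ biprod.fst) = α.hom := by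
      rw [Φ.map_comp, hg, hfst, hf]
      simp only [Category.assoc, Iso.inv_hom_id_assoc, biprod.lift_fst, Category.comp_id]
    have hh : Φ.map (g ≫ biprod.snd) = α.hom ≫ φ := by
      rw [Φ.map_comp, hg, hsnd, hf]
      simp only [Category.assoc, Iso.inv_hom_id_assoc, biprod.lift_snd]
    have hWt : N.trW (g ≫ biprod.fst) := (hW _).2 (by rw [ht]; infer_instance)
    haveI : IsIso (L.map (g ≫ biprod.fst)) := Localization.inverts L N.trW _ hWt
    refine ⟨eP.inv ≫ inv (L.map (g ≫ biprod.fst)) ≫ L.map (g ≫ biprod.snd) ≫ eQ.hom, ?_⟩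
    have h1 : Φ'.map (inv (L.map (g ≫ biprod.fst))) = inv (Φ'.map (L.map (g ≫ biprod.fst))) := by
      apply IsIso.eq_inv_of_hom_inv_id
      rw [← Φ'.map_comp, IsIso.hom_inv_id, Φ'.map_id]
    have h2 : inv (Φ'.map (L.map (g ≫ biprod.fst))) =
        e.hom.app X ≫ α.inv ≫ e.inv.app X' := by
      apply IsIso.inv_eq_of_hom_inv_id
      rw [hmap, ht]
      simp
    have h3 : Φ'.map (L.map (g ≫ biprod.snd)) =
        e.hom.app X' ≫ α.hom ≫ φ ≫ e.inv.app Y := by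
      rw [hmap, hh]
      simp
    rw [Φ'.map_comp, Φ'.map_comp, Φ'.map_comp, h1, h2, h3]
    simp only [hφ, hψ', Category.assoc, Iso.inv_hom_id_app_assoc, Iso.hom_inv_id_app_assoc,
      Iso.inv_hom_id_app, Category.comp_id]
    rw [Iso.inv_hom_id_assoc, Iso.hom_inv_id_app_assoc, ← Φ'.map_comp_assoc, eP.inv_hom_id,
      Φ'.map_id, Category.id_comp, ← Φ'.map_comp, eQ.inv_hom_id, Φ'.map_id, Category.comp_id]
  haveI : Φ'.EssSurj := by
    refine ⟨fun Y => ?_⟩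
    obtain ⟨X', g, α, -⟩ := hlift 0 Y 0
    exact ⟨L.obj X', ⟨e.app X' ≪≫ α⟩⟩
  exact { }
end

section
/- Let Φ : C → D be an exact (triangulated) functor between triangulated categories such that ker(Φ) = 0, i.e., every object X of C with Φ(X) ≅ 0 is a zero object. Fix an object C of C and assume that for every object C' of C the map Φ : Hom_C(C, C') → Hom_D(Φ(C), Φ(C')) is surjective. Then for every object C' of C this map is bijective. -/
open CategoryTheory Limits Pretriangulated

/-- Let `Φ : C ⥤ D` be an exact (triangulated) functor between (pre)triangulated
categories with `ker Φ = 0`, i.e. any object with `Φ X ≅ 0` is zero. Fix `C : C` and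
assume that for every `C'` the map `Φ : Hom(C, C') → Hom(Φ C, Φ C')` is surjective.
Then this map is bijective for every `C'`. -/
theorem stmt_1 {C D : Type*} [Category C] [Category D]
    [HasZeroObject C] [HasShift C ℤ] [Preadditive C]
    [∀ n : ℤ, (CategoryTheory.shiftFunctor C n).Additive] [Pretriangulated C]
    [HasZeroObject D] [HasShift D ℤ] [Preadditive D]
    [∀ n : ℤ, (CategoryTheory.shiftFunctor D n).Additive] [Pretriangulated D]
    (Φ : C ⥤ D) [Φ.Additive] [Φ.CommShift ℤ] [Φ.IsTriangulated]
    (hker : ∀ X : C, IsZero (Φ.obj X) → IsZero X)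
    (X : C)
    (hsurj : ∀ Y : C, Function.Surjective (fun f : X ⟶ Y => Φ.map f)) :
    ∀ Y : C, Function.Bijective (fun f : X ⟶ Y => Φ.map f) := by
  intro Y
  refine ⟨?_, hsurj Y⟩
  -- it suffices to show Φ.map f = 0 → f = 0
  have key : ∀ (f : X ⟶ Y), Φ.map f = 0 → f = 0 := by
    intro f hf
    obtain ⟨Z, g, h, hT⟩ := distinguished_cocone_triangle₁ f
    have hDT := Φ.map_distinguished _ hT
    -- in the mapped triangle, mor₂ = Φ.map f = 0, so 𝟙 factors through Φ.map g
    obtain ⟨s, hs⟩ := Triangle.coyoneda_exact₂ _ hDT (𝟙 (Φ.obj X))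
      (by change 𝟙 (Φ.obj X) ≫ Φ.map f = 0; rw [hf, comp_zero])
    change 𝟙 (Φ.obj X) = s ≫ Φ.map g at hs
    obtain ⟨t, ht⟩ := hsurj Z s
    dsimp at ht
    -- c := t ≫ g satisfies Φ.map c = 𝟙
    have hc : Φ.map (t ≫ g) = 𝟙 (Φ.obj X) := by rw [Φ.map_comp, ht]; exact hs.symm
    obtain ⟨Q, p, h', hT'⟩ := distinguished_cocone_triangle (t ≫ g)
    have hDT' := Φ.map_distinguished _ hT'
    have hQ : IsZero (Φ.obj Q) := by
      have : IsIso ((Φ.mapTriangle.obj (Triangle.mk (t ≫ g) p h')).mor₁) := by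
        change IsIso (Φ.map (t ≫ g)); rw [hc]; infer_instance
      exact Triangle.isZero₃_of_isIso₁ _ hDT' this
    have hQ' : IsZero Q := hker Q hQ
    have : IsIso (t ≫ g) := by
      have := (Triangle.isZero₃_iff_isIso₁ _ hT').1 hQ'
      exact this
    have hepi : Epi g := epi_of_epi t g
    have hgf : g ≫ f = 0 := comp_distTriang_mor_zero₁₂ _ hT
    rw [← cancel_epi g, hgf, comp_zero]
  intro f₁ f₂ hf
  dsimp at hf
  have : Φ.map (f₁ - f₂) = 0 := by rw [Φ.map_sub, hf, sub_self]
  have := key _ this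
  rwa [sub_eq_zero] at this
end

section
/- Let R be a commutative ring and W ∈ R a non-zero-divisor. Let (E₀, E₁, δ₀, δ₁) be a matrix factorization of W with E₀ and E₁ projective R-modules (not necessarily finitely generated). Then the induced 2-periodic complex of R/(W)-modules ⋯ → E₁/WE₁ →(δ̄₁) E₀/WE₀ →(δ̄₀) E₁/WE₁ →(δ̄₁) E₀/WE₀ → ⋯ is exact; that is, ker(δ̄₀ : E₀/WE₀ → E₁/WE₁) = im(δ̄₁ : E₁/WE₁ → E₀/WE₀) and ker(δ̄₁ : E₁/WE₁ → E₀/WE₀) = im(δ̄₀ : E₀/WE₀ → E₁/WE₁). -/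
lemma smul_inj_of_proj {R : Type*} [CommRing R] {M : Type*} [AddCommGroup M] [Module R M]
    (hP : Module.Projective R M) {W : R} (hW : W ∈ nonZeroDivisors R)
    {x : M} (hx : W • x = 0) : x = 0 := by
  obtain ⟨s, hs⟩ := Module.projective_def'.mp hP
  have h1 : W • s x = 0 := by rw [← map_smul, hx, map_zero]
  have h2 : s x = 0 := by
    ext a
    have h3 : W • (s x) a = 0 := by rw [← Finsupp.smul_apply, h1, Finsupp.coe_zero, Pi.zero_apply]
    exact hW.2 _ (by simpa [smul_eq_mul, mul_comm] using h3)
  have := congrArg (fun f => f x) hs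
  simp only [LinearMap.comp_apply, LinearMap.id_apply] at this
  rw [← this, h2, map_zero]

lemma half {R : Type*} [CommRing R] {W : R} (hW : W ∈ nonZeroDivisors R)
    {E₀ E₁ : Type*} [AddCommGroup E₀] [Module R E₀] [AddCommGroup E₁] [Module R E₁]
    (hP₀ : Module.Projective R E₀)
    (δ₁ : E₁ →ₗ[R] E₀) (δ₀ : E₀ →ₗ[R] E₁)
    (h01 : δ₀ ∘ₗ δ₁ = W • (LinearMap.id : E₁ →ₗ[R] E₁))
    (h10 : δ₁ ∘ₗ δ₀ = W • (LinearMap.id : E₀ →ₗ[R] E₀))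
    (d₁ : (E₁ ⧸ LinearMap.range (W • (LinearMap.id : E₁ →ₗ[R] E₁)))
        →ₗ[R] (E₀ ⧸ LinearMap.range (W • (LinearMap.id : E₀ →ₗ[R] E₀))))
    (d₀ : (E₀ ⧸ LinearMap.range (W • (LinearMap.id : E₀ →ₗ[R] E₀)))
        →ₗ[R] (E₁ ⧸ LinearMap.range (W • (LinearMap.id : E₁ →ₗ[R] E₁))))
    (hd₁ : d₁ ∘ₗ (LinearMap.range (W • (LinearMap.id : E₁ →ₗ[R] E₁))).mkQ
        = (LinearMap.range (W • (LinearMap.id : E₀ →ₗ[R] E₀))).mkQ ∘ₗ δ₁)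
    (hd₀ : d₀ ∘ₗ (LinearMap.range (W • (LinearMap.id : E₀ →ₗ[R] E₀))).mkQ
        = (LinearMap.range (W • (LinearMap.id : E₁ →ₗ[R] E₁))).mkQ ∘ₗ δ₀) :
    LinearMap.ker d₀ = LinearMap.range d₁ := by
  have hd₁' : ∀ e, d₁ ((LinearMap.range (W • (LinearMap.id : E₁ →ₗ[R] E₁))).mkQ e)
      = (LinearMap.range (W • (LinearMap.id : E₀ →ₗ[R] E₀))).mkQ (δ₁ e) :=
    fun e => congrArg (fun f => f e) hd₁
  have hd₀' : ∀ e, d₀ ((LinearMap.range (W • (LinearMap.id : E₀ →ₗ[R] E₀))).mkQ e)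
      = (LinearMap.range (W • (LinearMap.id : E₁ →ₗ[R] E₁))).mkQ (δ₀ e) :=
    fun e => congrArg (fun f => f e) hd₀
  ext x
  obtain ⟨e, rfl⟩ := Submodule.mkQ_surjective _ x
  constructor
  · intro hx
    rw [LinearMap.mem_ker, hd₀', Submodule.mkQ_apply, Submodule.Quotient.mk_eq_zero] at hx
    obtain ⟨y, hy⟩ := hx
    simp only [LinearMap.smul_apply, LinearMap.id_apply] at hy
    -- δ₀ (e - δ₁ y) = 0
    have h1 : δ₀ (e - δ₁ y) = 0 := by
      have : δ₀ (δ₁ y) = W • y := congrArg (fun f => f y) h01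
      rw [map_sub, this, hy, sub_self]
    have h2 : W • (e - δ₁ y) = 0 := by
      have : δ₁ (δ₀ (e - δ₁ y)) = W • (e - δ₁ y) := congrArg (fun f => f (e - δ₁ y)) h10
      rw [← this, h1, map_zero]
    have h3 : e = δ₁ y := sub_eq_zero.mp (smul_inj_of_proj hP₀ hW h2)
    exact ⟨Submodule.mkQ _ y, by rw [hd₁', h3]⟩
  · rintro ⟨z, hz⟩
    obtain ⟨w, rfl⟩ := Submodule.mkQ_surjective _ z
    rw [← hz]
    rw [LinearMap.mem_ker, hd₁', hd₀', Submodule.mkQ_apply, Submodule.Quotient.mk_eq_zero]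
    refine ⟨w, ?_⟩
    simpa using (congrArg (fun f => f w) h01).symm


/-- Let `W ∈ R` be a non-zero-divisor and `(E₀, E₁, δ₀, δ₁)` a matrix factorization of `W`
with `E₀`, `E₁` projective. Then the induced `2`-periodic complex
`⋯ → E₁/WE₁ → E₀/WE₀ → E₁/WE₁ → ⋯` on the quotients by `WEᵢ := range (W • id)` is exact:
for the induced maps `d₀ : E₀/WE₀ → E₁/WE₁` and `d₁ : E₁/WE₁ → E₀/WE₀`
one has `ker d₀ = im d₁` and `ker d₁ = im d₀`. -/
theorem stmt_3 {R : Type*} [CommRing R] (W : R) (hW : W ∈ nonZeroDivisors R)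
    {E₀ E₁ : Type*} [AddCommGroup E₀] [Module R E₀] [AddCommGroup E₁] [Module R E₁]
    (hP₀ : Module.Projective R E₀) (hP₁ : Module.Projective R E₁)
    (δ₁ : E₁ →ₗ[R] E₀) (δ₀ : E₀ →ₗ[R] E₁)
    (h01 : δ₀ ∘ₗ δ₁ = W • (LinearMap.id : E₁ →ₗ[R] E₁))
    (h10 : δ₁ ∘ₗ δ₀ = W • (LinearMap.id : E₀ →ₗ[R] E₀))
    (d₁ : (E₁ ⧸ LinearMap.range (W • (LinearMap.id : E₁ →ₗ[R] E₁)))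
        →ₗ[R] (E₀ ⧸ LinearMap.range (W • (LinearMap.id : E₀ →ₗ[R] E₀))))
    (d₀ : (E₀ ⧸ LinearMap.range (W • (LinearMap.id : E₀ →ₗ[R] E₀)))
        →ₗ[R] (E₁ ⧸ LinearMap.range (W • (LinearMap.id : E₁ →ₗ[R] E₁))))
    (hd₁ : d₁ ∘ₗ (LinearMap.range (W • (LinearMap.id : E₁ →ₗ[R] E₁))).mkQ
        = (LinearMap.range (W • (LinearMap.id : E₀ →ₗ[R] E₀))).mkQ ∘ₗ δ₁)
    (hd₀ : d₀ ∘ₗ (LinearMap.range (W • (LinearMap.id : E₀ →ₗ[R] E₀))).mkQ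
        = (LinearMap.range (W • (LinearMap.id : E₁ →ₗ[R] E₁))).mkQ ∘ₗ δ₀) :
    LinearMap.ker d₀ = LinearMap.range d₁ ∧ LinearMap.ker d₁ = LinearMap.range d₀ := by
  exact ⟨half hW hP₀ δ₁ δ₀ h01 h10 d₁ d₀ hd₁ hd₀,
    half hW hP₁ δ₀ δ₁ h10 h01 d₀ d₁ hd₀ hd₁⟩
end

section
/- Let R be a commutative ring, W ∈ R, and let F be an R-module with W·F = 0. Let p : E₀ → F be a surjective R-linear map from an R-module E₀, let E₁ = ker(p), and let δ₁ : E₁ → E₀ be the inclusion. Then there exists a unique R-linear map δ₀ : E₀ → E₁ such that δ₁ ∘ δ₀ = W·id_{E₀}; moreover this δ₀ satisfies δ₀ ∘ δ₁ = W·id_{E₁}, so that (E₀, E₁, δ₀, δ₁) is a matrix factorization of W, and coker(δ₁ : E₁ → E₀) is isomorphic to F as an R-module. -/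
/-- Let `W ∈ R`, `F` an `R`-module with `W·F = 0`, `p : E₀ → F` surjective,
`E₁ = ker p` with inclusion `δ₁`. Then there is a unique `δ₀ : E₀ → E₁` with
`δ₁ ∘ δ₀ = W·id`; moreover any such `δ₀` satisfies `δ₀ ∘ δ₁ = W·id`
(so `(E₀, E₁, δ₀, δ₁)` is a matrix factorization of `W`), and
`coker δ₁ ≅ F` as `R`-modules. -/
theorem stmt_6 {R : Type*} [CommRing R] (W : R)
    {E₀ F : Type*} [AddCommGroup E₀] [Module R E₀] [AddCommGroup F] [Module R F]
    (hWF : ∀ x : F, W • x = 0)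
    (p : E₀ →ₗ[R] F) (hp : Function.Surjective p) :
    (∃! δ₀ : E₀ →ₗ[R] (LinearMap.ker p),
        (LinearMap.ker p).subtype ∘ₗ δ₀ = W • (LinearMap.id : E₀ →ₗ[R] E₀)) ∧
    (∀ δ₀ : E₀ →ₗ[R] (LinearMap.ker p),
        (LinearMap.ker p).subtype ∘ₗ δ₀ = W • (LinearMap.id : E₀ →ₗ[R] E₀) →
        δ₀ ∘ₗ (LinearMap.ker p).subtype
          = W • (LinearMap.id : (LinearMap.ker p) →ₗ[R] (LinearMap.ker p))) ∧
    Nonempty ((E₀ ⧸ LinearMap.range (LinearMap.ker p).subtype) ≃ₗ[R] F) := by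
  refine ⟨⟨(W • LinearMap.id).codRestrict _ (fun x => ?_), ?_, ?_⟩, ?_, ?_⟩
  · simp [hWF]
  · ext x; rfl
  · intro δ hδ
    ext x
    have := congrArg (fun f => f x) hδ
    simpa using this
  · intro δ hδ
    ext x
    have := congrArg (fun f => f (x : E₀)) hδ
    simpa using this
  · refine ⟨?_⟩
    have h : LinearMap.range (LinearMap.ker p).subtype = LinearMap.ker p :=
      Submodule.range_subtype _
    exact (Submodule.quotEquivOfEq _ _ h).trans (p.quotKerEquivOfSurjective hp)
end

section
/- Let A be a commutative Noetherian ring and n ≥ 0 an integer such that Ext^i_A(M, P) = 0 for every A-module M, every projective A-module P, and every i > n. Suppose 0 → P⁰ → P¹ → P² → ⋯ is an exact sequence of A-modules indexed by the natural numbers (exact at every term, with P⁰ → P¹ injective) in which every Pⁱ is projective (not necessarily finitely generated). Then N = coker(P⁰ → P¹) is a projective A-module; indeed the short exact sequence 0 → P⁰ → P¹ → N → 0 splits. -/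
open CategoryTheory Opposite Limits

noncomputable section AuxChain

variable {A : Type} [CommRing A] (P : ℕ → Type)
  [∀ i, AddCommGroup (P i)] [∀ i, Module A (P i)]

/-- Cast along an equality of indices. -/
def pcast {a b : ℕ} (h : a = b) : P a →ₗ[A] P b := h ▸ LinearMap.id

variable (d : ∀ i, P i →ₗ[A] P (i + 1))

lemma pcast_pcast {a b : ℕ} (h : a = b) (h' : b = a) (x : P b) :
    pcast (A := A) P h (pcast (A := A) P h' x) = x := by subst h; rfl

lemma pcast_inj {a b : ℕ} (h : a = b) (x : P a) (hx : pcast (A := A) P h x = 0) : x = 0 := by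
  subst h; exact hx

lemma chain_comp (hex : ∀ i, LinearMap.ker (d (i + 1)) = LinearMap.range (d i))
    {a b c : ℕ} (hab : a + 1 = b) (hbc : b + 1 = c) (x : P a) :
    pcast (A := A) P hbc (d b (pcast (A := A) P hab (d a x))) = 0 := by
  subst hab; subst hbc
  show d (a + 1) (d a x) = 0
  have : d a x ∈ LinearMap.ker (d (a + 1)) := by
    rw [hex a]; exact ⟨x, rfl⟩
  exact this

lemma chain_exact (hex : ∀ i, LinearMap.ker (d (i + 1)) = LinearMap.range (d i))
    {a b c : ℕ} (hab : a + 1 = b) (hbc : b + 1 = c) (x : P b)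
    (hx : pcast (A := A) P hbc (d b x) = 0) : ∃ y : P a, pcast (A := A) P hab (d a y) = x := by
  subst hab; subst hbc
  have hx' : x ∈ LinearMap.ker (d (a + 1)) := hx
  rw [hex a] at hx'
  obtain ⟨y, hy⟩ := hx'
  exact ⟨y, hy⟩

lemma bot_inj (hinj : Function.Injective (d 0))
    {a b : ℕ} (ha : a = 0) (hab : a + 1 = b) (x : P a)
    (hx : pcast (A := A) P hab (d a x) = 0) : x = 0 := by
  subst ha; subst hab
  have hx' : d 0 x = 0 := hx
  exact hinj (by rw [hx', map_zero])

lemma pcast_d {a b : ℕ} (ha : (0 : ℕ) = a) (hab : a + 1 = b) (h1 : 1 = b) (x : P 0) :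
    pcast (A := A) P h1 (d 0 x) = pcast (A := A) P hab (d a (pcast (A := A) P ha x)) := by
  subst ha; subst hab; rfl

end AuxChain

noncomputable section AuxChain2

/-- The objects of the reversed chain. -/
abbrev Qs (A : Type) [CommRing A] (P : ℕ → Type) [∀ i, AddCommGroup (P i)] [∀ i, Module A (P i)] (m k : ℕ) : ModuleCat.{0} A := ModuleCat.of A (P (m - k))

variable {A : Type} [CommRing A] (P : ℕ → Type)
  [∀ i, AddCommGroup (P i)] [∀ i, Module A (P i)]
  (d : ∀ i, P i →ₗ[A] P (i + 1)) (m : ℕ)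


/-- The differentials of the reversed chain. -/
def eQs (k : ℕ) : Qs A P m (k + 1) ⟶ Qs A P m k :=
  if h : k + 1 ≤ m then
    ModuleCat.ofHom ((pcast (A := A) P (show (m - (k + 1)) + 1 = m - k by omega)).comp (d (m - (k + 1))))
  else if Even (k - m) then 0
  else ModuleCat.ofHom (pcast (A := A) P (show m - (k + 1) = m - k by omega))

lemma eQs_comp (hexd : ∀ i, LinearMap.ker (d (i + 1)) = LinearMap.range (d i)) (k : ℕ) :
    eQs P d m (k + 1) ≫ eQs P d m k = 0 := by
  apply ModuleCat.hom_ext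
  apply LinearMap.ext
  intro x
  show eQs P d m k (eQs P d m (k + 1) x) = 0
  by_cases h1 : k + 2 ≤ m
  · simp only [eQs]
    rw [dif_pos (show k + 1 + 1 ≤ m by omega), dif_pos (show k + 1 ≤ m by omega)]
    exact chain_comp P d hexd _ _ x
  · by_cases h2 : k + 1 ≤ m
    · -- k + 1 = m, eQs (k+1) = 0
      simp only [eQs]
      rw [dif_neg (show ¬ (k + 1 + 1 ≤ m) by omega),
        if_pos (show Even (k + 1 - m) by simp [show k + 1 - m = 0 by omega])]
      rw [show (0 : Qs A P m (k + 1 + 1) ⟶ Qs A P m (k + 1)) x = 0 from rfl, map_zero]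
    · -- m ≤ k
      by_cases h3 : Even (k - m)
      · -- eQs k = 0
        conv_lhs => rw [eQs]
        rw [dif_neg (show ¬ (k + 1 ≤ m) by omega), if_pos h3]
        rfl
      · -- eQs (k+1) = 0
        simp only [eQs]
        rw [dif_neg (show ¬ (k + 1 + 1 ≤ m) by omega),
          if_pos (show Even (k + 1 - m) by
            obtain ⟨j, hj⟩ := Nat.odd_iff.2 (Nat.not_even_iff.1 h3)
            exact ⟨j + 1, by omega⟩)]
        rw [show (0 : Qs A P m (k + 1 + 1) ⟶ Qs A P m (k + 1)) x = 0 from rfl, map_zero]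

lemma eQs_exact (hexd : ∀ i, LinearMap.ker (d (i + 1)) = LinearMap.range (d i))
    (hinj : Function.Injective (d 0)) (k : ℕ) (x : Qs A P m (k + 1))
    (hx : eQs P d m k x = 0) : ∃ y, eQs P d m (k + 1) y = x := by
  by_cases h1 : k + 2 ≤ m
  · rw [eQs, dif_pos (show k + 1 ≤ m by omega)] at hx
    obtain ⟨y, hy⟩ := chain_exact P d hexd
      (show (m - (k + 1 + 1)) + 1 = m - (k + 1) by omega) _ x hx
    refine ⟨y, ?_⟩
    rw [eQs, dif_pos (show k + 1 + 1 ≤ m by omega)]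
    exact hy
  · by_cases h2 : k + 1 ≤ m
    · -- k + 1 = m : x = 0 since d 0 injective
      rw [eQs, dif_pos h2] at hx
      have hx0 : x = 0 := bot_inj P d hinj (show m - (k + 1) = 0 by omega) _ x hx
      exact ⟨0, by rw [map_zero, hx0]⟩
    · by_cases h3 : Even (k - m)
      · -- eQs (k+1) = pcast, surjective
        refine ⟨pcast (A := A) P (show m - (k + 1) = m - (k + 1 + 1) by omega) x, ?_⟩
        rw [eQs, dif_neg (show ¬ (k + 1 + 1 ≤ m) by omega),
          if_neg (show ¬ Even (k + 1 - m) by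
            rw [Nat.even_sub (by omega)] at h3 ⊢
            simp only [Nat.even_add_one]
            tauto)]
        exact pcast_pcast P _ _ x
      · -- eQs k = pcast injective, so x = 0
        rw [eQs, dif_neg (show ¬ (k + 1 ≤ m) by omega), if_neg h3] at hx
        have hx0 : x = 0 := pcast_inj P _ x hx
        exact ⟨0, by rw [map_zero, hx0]⟩

end AuxChain2

noncomputable section AuxRes

variable {A : Type} [CommRing A]

variable {A : Type} [CommRing A]

/-- Build a projective resolution of `Q 0 ⧸ range (e 0)` from an exact complex of projectives. -/
def myRes (Q : ℕ → ModuleCat.{0} A)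
    (hQ : ∀ k, Projective (Q k)) (e : ∀ k, Q (k+1) ⟶ Q k)
    (hc : ∀ k, e (k+1) ≫ e k = 0)
    (hex : ∀ k (x : Q (k+1)), e k x = 0 → ∃ y, e (k+1) y = x) :
    ProjectiveResolution (ModuleCat.of A
      ((Q 0 : Type) ⧸ LinearMap.range ((e 0).hom : (Q 1 : Type) →ₗ[A] Q 0))) := by
  set M := ModuleCat.of A ((Q 0 : Type) ⧸ LinearMap.range ((e 0).hom : (Q 1 : Type) →ₗ[A] Q 0))
  set C : ChainComplex (ModuleCat A) ℕ := ChainComplex.of Q e hc with hC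
  have hd : ∀ k, C.d (k+1) k = e k := fun k => ChainComplex.of_d Q e k
  set π0 : C.X 0 ⟶ M :=
    (ModuleCat.ofHom (LinearMap.range ((e 0).hom : (Q 1 : Type) →ₗ[A] Q 0)).mkQ) with hπ0def
  have hπ0 : C.d 1 0 ≫ π0 = 0 := by
    rw [hd]
    apply ModuleCat.hom_ext
    apply LinearMap.ext
    intro x
    exact (Submodule.Quotient.mk_eq_zero _).2 ⟨x, rfl⟩
  have hexactsucc : ∀ k, C.ExactAt (k+1) := by
    intro k
    rw [HomologicalComplex.exactAt_iff' _ (k+2) (k+1) k (by simp) (by simp)]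
    rw [ShortComplex.moduleCat_exact_iff]
    intro x hx
    simp only [HomologicalComplex.shortComplexFunctor'_obj_X₂,
      HomologicalComplex.shortComplexFunctor'_obj_g,
      HomologicalComplex.shortComplexFunctor'_obj_f, hd] at hx ⊢
    exact hex k x hx
  refine
    { complex := C
      projective := fun k => hQ k
      π := (ChainComplex.toSingle₀Equiv C M).symm ⟨π0, hπ0⟩
      quasiIso := ⟨fun i => ?_⟩ }
  cases i with
  | succ k =>
      rw [quasiIsoAt_iff_exactAt']
      · exact hexactsucc k
      · apply ChainComplex.exactAt_succ_single_obj
  | zero =>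
      have w : e 0 ≫ π0 = 0 := by rw [← hd 0]; exact hπ0
      have hS : (ShortComplex.mk (e 0) π0 w).Exact := by
        rw [ShortComplex.moduleCat_exact_iff]
        intro x hx
        obtain ⟨y, hy⟩ := (Submodule.Quotient.mk_eq_zero (LinearMap.range (e 0).hom) (x := x)).1 hx
        exact ⟨y, hy⟩
      have hEpi : Epi (ShortComplex.mk (e 0) π0 w).g := by
        rw [ModuleCat.epi_iff_surjective]
        exact Submodule.mkQ_surjective (LinearMap.range (e 0).hom)
      rw [ChainComplex.quasiIsoAt₀_iff, ShortComplex.quasiIso_iff_of_zeros']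
      · refine (ShortComplex.exact_and_epi_g_iff_of_iso ?_).2 ⟨hS, hEpi⟩
        exact ShortComplex.isoMk (Iso.refl _) (Iso.refl _) (Iso.refl _)
          (by exact (Category.id_comp _).trans (Category.comp_id _).symm)
          (by exact (Category.id_comp _).trans (Category.comp_id _).symm)
      all_goals rfl


lemma aux_lift (t : ℕ) (Q : ℕ → ModuleCat.{0} A)
    (hQ : ∀ k, Projective (Q k)) (e : ∀ k, Q (k+1) ⟶ Q k)
    (hc : ∀ k, e (k+1) ≫ e k = 0)
    (hex : ∀ k (x : Q (k+1)), e k x = 0 → ∃ y, e (k+1) y = x)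
    (Y : ModuleCat.{0} A)
    (hsub : Subsingleton (((Ext A (ModuleCat A) (t+1)).obj
      (op (ModuleCat.of A ((Q 0 : Type) ⧸ LinearMap.range ((e 0).hom : (Q 1 : Type) →ₗ[A] Q 0))))).obj Y))
    (f : Q (t+1) ⟶ Y) (hf : e (t+1) ≫ f = 0) :
    ∃ g : Q t ⟶ Y, e t ≫ g = f := by
  set R := myRes Q hQ e hc hex with hR
  set C : ChainComplex (ModuleCat A) ℕ := ChainComplex.of Q e hc with hCdef
  have hC : R.complex = C := rfl
  have hd : ∀ k, C.d (k+1) k = e k := fun k => ChainComplex.of_d Q e k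
  set D := C.linearYonedaObj A Y with hD
  have hDd : ∀ (i j : ℕ) (φ : C.X i ⟶ Y), D.d i j φ = C.d j i ≫ φ := fun _ _ _ => rfl
  -- transfer subsingleton through isoExt
  have iso := R.isoExt (R := A) (t+1) Y
  have hsub2 : Subsingleton (D.homology (t+1) : Type) := by
    have equiv : (((Ext A (ModuleCat A) (t+1)).obj
        (op (ModuleCat.of A ((Q 0 : Type) ⧸ LinearMap.range
        ((e 0).hom : (Q 1 : Type) →ₗ[A] Q 0))))).obj Y : Type) ≃ (D.homology (t+1) : Type) :=
      ((forget (ModuleCat A)).mapIso iso).toEquiv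
    exact Equiv.subsingleton.symm equiv
  have hzero : IsZero (D.homology (t+1)) := @ModuleCat.isZero_of_subsingleton _ _ _ hsub2
  have hexD : D.ExactAt (t+1) := (HomologicalComplex.exactAt_iff_isZero_homology _ _).2 hzero
  rw [HomologicalComplex.exactAt_iff' _ t (t+1) (t+2) (by simp) (by simp)] at hexD
  rw [ShortComplex.moduleCat_exact_iff] at hexD
  have hgf : (HomologicalComplex.sc' D t (t+1) (t+2)).g f = 0 := by
    show D.d (t+1) (t+2) f = 0
    rw [hDd, hd, hf]
    rfl
  obtain ⟨g, hg⟩ := hexD f hgf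
  refine ⟨g, ?_⟩
  have : D.d t (t+1) g = f := hg
  have h2 := hDd t (t+1) g
  rw [hd] at h2
  exact h2.symm.trans this

end AuxRes


/-- Let `A` be a commutative Noetherian ring and `n` such that `Ext^i_A(M, P) = 0`
for every `A`-module `M`, every projective `A`-module `P` and every `i > n`.
If `0 → P⁰ → P¹ → P² → ⋯` is an exact sequence of projective `A`-modules, then
`N = coker(P⁰ → P¹)` is projective; indeed `0 → P⁰ → P¹ → N → 0` splits. -/
theorem stmt_8 {A : Type} [CommRing A] [IsNoetherianRing A] (n : ℕ)
    (hExt : ∀ (M P : Type) [AddCommGroup M] [Module A M] [AddCommGroup P] [Module A P],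
      Module.Projective A P → ∀ i : ℕ, n < i →
      Subsingleton (((Ext A (ModuleCat A) i).obj
        (op (ModuleCat.of A M))).obj (ModuleCat.of A P)))
    (P : ℕ → Type) [∀ i, AddCommGroup (P i)] [∀ i, Module A (P i)]
    (hproj : ∀ i, Module.Projective A (P i))
    (d : ∀ i, P i →ₗ[A] P (i + 1))
    (hinj : Function.Injective (d 0))
    (hex : ∀ i, LinearMap.ker (d (i + 1)) = LinearMap.range (d i)) :
    Module.Projective A (P 1 ⧸ LinearMap.range (d 0)) ∧
      ∃ s : P 1 →ₗ[A] P 0, s ∘ₗ d 0 = LinearMap.id := by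
  classical
  set m := n + 1 with hm
  have hQ : ∀ k, CategoryTheory.Projective (Qs A P m k) :=
    fun k => (IsProjective.iff_projective _).mp (hproj _)
  have hcc : ∀ k, eQs P d m (k + 1) ≫ eQs P d m k = 0 := eQs_comp P d m hex
  have hee : ∀ k (x : Qs A P m (k + 1)), eQs P d m k x = 0 →
      ∃ y, eQs P d m (k + 1) y = x := eQs_exact P d m hex hinj
  -- the map to be extended
  have h0 : m - (n + 1) = 0 := by omega
  set f : Qs A P m (n + 1) ⟶ ModuleCat.of A (P 0) := ModuleCat.ofHom (pcast (A := A) P h0) with hfdef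
  have hf : eQs P d m (n + 1) ≫ f = 0 := by
    rw [eQs, dif_neg (show ¬ (n + 1 + 1 ≤ m) by omega),
      if_pos (show Even (n + 1 - m) by simp [show n + 1 - m = 0 by omega])]
    exact zero_comp
  obtain ⟨g, hg⟩ := aux_lift n (Qs A P m) hQ (eQs P d m) hcc hee
    (ModuleCat.of A (P 0)) (hExt _ _ (hproj 0) (n + 1) (by omega)) f hf
  -- extract the retraction
  have h1 : (1 : ℕ) = m - n := by omega
  set s : P 1 →ₗ[A] P 0 :=
    (g.hom : (Qs A P m n : Type) →ₗ[A] P 0).comp (pcast (A := A) P h1) with hsdef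
  rw [eQs, dif_pos (show n + 1 ≤ m by omega)] at hg
  have key : ∀ x : P 0, s (d 0 x) = x := by
    intro x
    have hgy := LinearMap.ext_iff.mp (congrArg ModuleCat.Hom.hom hg) (pcast (A := A) P h0.symm x)
    have hL : (eQs P d m n ≫ g : Qs A P m (n + 1) ⟶ ModuleCat.of A (P 0)) = _ := rfl
    have step1 : s (d 0 x) =
        g (pcast (A := A) P (show (m - (n + 1)) + 1 = m - n by omega)
          (d (m - (n + 1)) (pcast (A := A) P h0.symm x))) := by
      show g (pcast (A := A) P h1 (d 0 x)) = _
      rw [pcast_d P d h0.symm _ h1 x]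
    rw [step1]
    have step2 := hgy
    calc g (pcast (A := A) P (show (m - (n + 1)) + 1 = m - n by omega)
          (d (m - (n + 1)) (pcast (A := A) P h0.symm x)))
        = f (pcast (A := A) P h0.symm x) := hgy
      _ = x := pcast_pcast P h0 h0.symm x
  have hsd : s ∘ₗ d 0 = LinearMap.id := LinearMap.ext key
  refine ⟨?_, s, hsd⟩
  -- projectivity of the cokernel
  haveI := hproj 1
  set φ : P 1 →ₗ[A] P 1 := LinearMap.id - (d 0).comp s with hφdef
  have hφ : LinearMap.range (d 0) ≤ LinearMap.ker φ := by
    rintro _ ⟨x, rfl⟩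
    simp only [hφdef, LinearMap.mem_ker, LinearMap.sub_apply, LinearMap.id_apply,
      LinearMap.comp_apply, key, sub_self]
  set σ : (P 1 ⧸ LinearMap.range (d 0)) →ₗ[A] P 1 :=
    (LinearMap.range (d 0)).liftQ φ hφ with hσdef
  refine Module.Projective.of_split σ (LinearMap.range (d 0)).mkQ ?_
  apply Submodule.linearMap_qext
  apply LinearMap.ext
  intro x
  simp only [LinearMap.comp_apply, Submodule.mkQ_apply, LinearMap.id_apply, hσdef,
    Submodule.liftQ_apply, hφdef, LinearMap.sub_apply, LinearMap.id_apply]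
  rw [Submodule.Quotient.eq]
  show x - (d 0) (s x) - x ∈ _
  have : x - (d 0) (s x) - x = -(d 0 (s x)) := by abel
  rw [this]
  exact Submodule.neg_mem _ ⟨s x, rfl⟩
end

section
/- Let (R, m, k) be a commutative Noetherian local ring with residue field k, and let W ∈ m be a non-zero-divisor of R. Let (E₀, E₁, δ₀, δ₁) be a matrix factorization of W with E₀ and E₁ finite free R-modules. Then the following are equivalent: (a) coker(δ₁ : E₁ → E₀) is a free R/(W)-module; (b) the sequence of k-vector spaces E₁ ⊗_R k →(δ₁⊗k) E₀ ⊗_R k →(δ₀⊗k) E₁ ⊗_R k is exact at E₀ ⊗_R k; (c) the sequence of k-vector spaces E₀ ⊗_R k →(δ₀⊗k) E₁ ⊗_R k →(δ₁⊗k) E₀ ⊗_R k is exact at E₁ ⊗_R k. -/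
set_option maxHeartbeats 1600000
set_option linter.unusedSectionVars false

open IsLocalRing

noncomputable section MFhelpers

variable {R : Type} [CommRing R]

lemma MF.mem_ideal_smul_top_iff_repr {M : Type} {ι : Type*} [AddCommGroup M] [Module R M]
    (b : Module.Basis ι R M) (I : Ideal R) (x : M) :
    x ∈ I • (⊤ : Submodule R M) ↔ ∀ i, b.repr x i ∈ I := by
  have htop : (⊤ : Submodule R M) = Submodule.span R (Set.range b) := b.span_eq.symm
  rw [htop, Submodule.mem_ideal_smul_span_iff_exists_sum]
  constructor
  · rintro ⟨a, ha, rfl⟩ i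
    rw [map_finsuppSum, Finsupp.sum_apply, Finsupp.sum]
    apply Ideal.sum_mem
    intro j _
    simp only [map_smul, Finsupp.smul_apply, smul_eq_mul]
    exact I.mul_mem_right _ (ha j)
  · intro h
    exact ⟨b.repr x, h, b.linearCombination_repr x⟩

lemma MF.smul_injective_of_free {M : Type} [AddCommGroup M] [Module R M] [Module.Free R M]
    {W : R} (hW : W ∈ nonZeroDivisors R) :
    Function.Injective (fun x : M => W • x) := by
  have b := Module.Free.chooseBasis R M
  intro x y hxy
  replace hxy : W • x = W • y := hxy
  apply b.repr.injective
  ext i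
  have h3 : W * b.repr x i = W * b.repr y i := by
    have := congrArg (fun z => b.repr z i) hxy
    simpa using this
  have h4 : (b.repr x i - b.repr y i) * W = 0 := by
    rw [sub_mul, mul_comm (b.repr x i) W, h3, mul_comm, sub_self]
  exact sub_eq_zero.mp (hW.2 _ h4)

lemma MF.mem_spanW_smul_top {M : Type} [AddCommGroup M] [Module R M] (W : R)
    {z : M} (hz : z ∈ (Ideal.span {W} : Ideal R) • (⊤ : Submodule R M)) :
    ∃ u : M, z = W • u := by
  refine Submodule.smul_induction_on hz ?_ ?_
  · intro a ha v hv
    obtain ⟨t, rfl⟩ := Ideal.mem_span_singleton'.mp ha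
    exact ⟨t • v, by rw [mul_smul, smul_comm]⟩
  · rintro x y ⟨u, rfl⟩ ⟨u', rfl⟩
    exact ⟨u + u', by rw [smul_add]⟩

lemma MF.quot_adapted_basis {M : Type} [AddCommGroup M] [Module R M] (W : R) {c r : ℕ}
    (g : Module.Basis (Fin c ⊕ Fin r) R M) :
    Nonempty ((M ⧸ (Submodule.span R (Set.range (fun j => g (Sum.inr j)))
        ⊔ (Ideal.span {W} : Ideal R) • ⊤)) ≃ₗ[R] (Fin c → R ⧸ Ideal.span {W})) := by
  classical
  set IW : Ideal R := Ideal.span {W}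
  set A : Submodule R M := Submodule.span R (Set.range (fun j => g (Sum.inr j))) ⊔ IW • ⊤
  set f : M →ₗ[R] (Fin c → R ⧸ IW) :=
    LinearMap.pi (fun i => (IW.mkQ).comp (g.coord (Sum.inl i)))
  have hf_apply : ∀ (v : M) (i : Fin c), f v i = IW.mkQ (g.repr v (Sum.inl i)) := fun v i => rfl
  have hsurj : Function.Surjective f := by
    intro t
    choose rt hrt using fun i : Fin c => Ideal.Quotient.mk_surjective (I := IW) (t i)
    refine ⟨∑ i, rt i • g (Sum.inl i), ?_⟩
    funext j
    rw [hf_apply]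
    have : g.repr (∑ i, rt i • g (Sum.inl i)) (Sum.inl j) = rt j := by
      rw [map_sum, Finsupp.finset_sum_apply]
      rw [Finset.sum_eq_single j]
      · simp
      · intro i _ hij
        simp [Module.Basis.repr_self, Finsupp.single_apply, Sum.inl.injEq, hij]
      · simp
    rw [this]
    exact hrt j
  have hker : A = LinearMap.ker f := by
    apply le_antisymm
    · apply sup_le
      · rw [Submodule.span_le]
        rintro _ ⟨j, rfl⟩
        rw [SetLike.mem_coe, LinearMap.mem_ker]
        funext i
        rw [hf_apply, Module.Basis.repr_self]
        simp [Finsupp.single_apply]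
      · rw [Submodule.smul_le]
        · intro w hw v _
          rw [LinearMap.mem_ker]
          funext i
          rw [hf_apply, map_smul]
          simp only [Finsupp.smul_apply, smul_eq_mul, Submodule.mkQ_apply, Pi.zero_apply]
          rw [Submodule.Quotient.mk_eq_zero]
          exact IW.mul_mem_right _ hw
    · intro v hv
      rw [LinearMap.mem_ker] at hv
      have hco : ∀ i : Fin c, g.repr v (Sum.inl i) ∈ IW := by
        intro i
        have := congrFun hv i
        rw [hf_apply] at this
        simp only [Pi.zero_apply, Submodule.mkQ_apply] at this
        rwa [Submodule.Quotient.mk_eq_zero] at this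
      have hsum := g.sum_repr v
      rw [Fintype.sum_sum_type] at hsum
      rw [← hsum]
      apply Submodule.add_mem
      · apply Submodule.sum_mem
        intro i _
        exact Submodule.mem_sup_right (Submodule.smul_mem_smul (hco i) trivial)
      · apply Submodule.sum_mem
        intro j _
        exact Submodule.mem_sup_left
          (Submodule.smul_mem _ _ (Submodule.subset_span ⟨j, rfl⟩))
  exact ⟨(Submodule.quotEquivOfEq A (LinearMap.ker f) hker) ≪≫ₗ
    f.quotKerEquivOfSurjective hsurj⟩

lemma MF.theta_of_iso {M N : Type} [AddCommGroup M] [Module R M] [AddCommGroup N] [Module R N]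
    {W : R} (φ : M →ₗ[R] N) {n : ℕ}
    (e : (N ⧸ LinearMap.range φ) ≃ₗ[R] (Fin n → R ⧸ Ideal.span {W})) :
    ∃ θ : N →ₗ[R] (Fin n → R ⧸ Ideal.span {W}),
      LinearMap.ker θ = LinearMap.range φ ∧ Function.Surjective θ := by
  refine ⟨e.toLinearMap ∘ₗ (LinearMap.range φ).mkQ, ?_, ?_⟩
  · rw [LinearMap.ker_comp, LinearEquiv.ker, Submodule.comap_bot, Submodule.ker_mkQ]
  · exact e.surjective.comp (Submodule.mkQ_surjective _)
end MFhelpers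

noncomputable section MFlocal

variable {R : Type} [CommRing R] [IsLocalRing R]

local notation "𝔪" => maximalIdeal R
local notation "k" => R ⧸ maximalIdeal R

noncomputable instance MF.fieldResidue : Field (R ⧸ maximalIdeal R) := Ideal.Quotient.field _

variable {M N : Type} [AddCommGroup M] [Module R M] [AddCommGroup N] [Module R N]

/-- the images of an `R`-basis of `M` form a `k`-basis of `M ⧸ 𝔪M`. -/
def MF.quotBasis {ι : Type*} (b : Module.Basis ι R M) :
    Module.Basis ι k (M ⧸ (𝔪 • ⊤ : Submodule R M)) := by
  refine Module.Basis.mk (v := fun i => Submodule.Quotient.mk (b i)) ?_ ?_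
  · rw [linearIndependent_iff']
    intro s g hg j hj
    choose r hr using fun i => Ideal.Quotient.mk_surjective (I := 𝔪) (g i)
    have h1 : (∑ i ∈ s, r i • b i) ∈ (𝔪 • ⊤ : Submodule R M) := by
      rw [← Submodule.Quotient.mk_eq_zero]
      have : (Submodule.Quotient.mk (∑ i ∈ s, r i • b i) :
          M ⧸ (𝔪 • ⊤ : Submodule R M)) = ∑ i ∈ s, g i • Submodule.Quotient.mk (b i) := by
        rw [← Submodule.mkQ_apply, map_sum]
        refine Finset.sum_congr rfl fun i _ => ?_
        rw [Submodule.mkQ_apply, Submodule.Quotient.mk_smul, ← hr i]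
        rfl
      rw [this, hg]
    rw [MF.mem_ideal_smul_top_iff_repr b] at h1
    have h2 := h1 j
    have h3 : (b.repr (∑ i ∈ s, r i • b i)) j = r j := by
      rw [map_sum]
      rw [Finsupp.finset_sum_apply]
      rw [Finset.sum_eq_single j]
      · simp
      · intro i _ hij
        simp [Module.Basis.repr_self, Finsupp.single_apply, hij]
      · intro h; exact absurd hj h
    rw [h3] at h2
    rw [← hr j, Ideal.Quotient.eq_zero_iff_mem]
    exact h2
  · rw [top_le_iff, eq_top_iff]
    intro v _
    obtain ⟨x, rfl⟩ := Submodule.Quotient.mk_surjective _ v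
    rw [← b.linearCombination_repr x, Finsupp.linearCombination_apply, ← Submodule.mkQ_apply,
      map_finsuppSum]
    apply Submodule.sum_mem
    intro i _
    show (𝔪 • ⊤ : Submodule R M).mkQ ((b.repr x i) • b i) ∈ _
    rw [Submodule.mkQ_apply, Submodule.Quotient.mk_smul]
    have : (b.repr x i) • (Submodule.Quotient.mk (b i) : M ⧸ (𝔪 • ⊤ : Submodule R M))
        = (Ideal.Quotient.mk 𝔪 (b.repr x i)) • Submodule.Quotient.mk (b i) := rfl
    rw [this]
    exact Submodule.smul_mem _ _ (Submodule.subset_span ⟨i, rfl⟩)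


lemma MF.span_R_eq_top_of_span_k {V : Type} [AddCommGroup V] [Module R V] [Module k V]
    [IsScalarTower R k V] (S : Set V) (h : Submodule.span k S = ⊤) :
    Submodule.span R S = ⊤ := by
  rw [eq_top_iff]
  have key : ∀ v, v ∈ Submodule.span k S → v ∈ Submodule.span R S := by
    intro v hv
    induction hv using Submodule.span_induction with
    | mem w hw => exact Submodule.subset_span hw
    | zero => exact Submodule.zero_mem _
    | add w₁ w₂ _ _ h1 h2 => exact Submodule.add_mem _ h1 h2
    | smul c w _ hw =>
        obtain ⟨r, rfl⟩ := Ideal.Quotient.mk_surjective (I := 𝔪) c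
        have : (Ideal.Quotient.mk 𝔪 r) • w = r • w := by
          rw [← algebraMap_smul (R ⧸ 𝔪) r w]; rfl
        rw [this]
        exact Submodule.smul_mem _ _ hw
  intro v _
  exact key v (h ▸ Submodule.mem_top)

/-- Module.Basis adaptation: a family of `M` whose images in `M/𝔪M` are `k`-linearly
independent extends to a basis of `M`. -/
lemma MF.exists_basis_extension [Module.Finite R M] [Module.Free R M] {r : ℕ} (F : Fin r → M)
    (hF : LinearIndependent k
      (fun j => (Submodule.Quotient.mk (F j) : M ⧸ (𝔪 • ⊤ : Submodule R M)))) :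
    ∃ (c : ℕ) (g : Module.Basis (Fin c ⊕ Fin r) R M), ∀ j, g (Sum.inr j) = F j := by
  classical
  set V := M ⧸ (𝔪 • ⊤ : Submodule R M)
  set q := (𝔪 • ⊤ : Submodule R M).mkQ
  haveI : Module.Finite R V := Module.Finite.quotient R _
  haveI : Module.Finite k V := Module.Finite.of_restrictScalars_finite R k V
  set qF : Fin r → V := fun j => Submodule.Quotient.mk (F j)
  set U : Submodule k V := Submodule.span k (Set.range qF)
  obtain ⟨Uc, hcompl⟩ := Submodule.exists_isCompl U
  set c := Module.finrank k Uc
  set bc : Module.Basis (Fin c) k Uc := Module.finBasis k Uc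
  choose x hx using fun i : Fin c => Submodule.Quotient.mk_surjective
    (𝔪 • ⊤ : Submodule R M) (bc i : V)
  set g0 : Fin c ⊕ Fin r → M := Sum.elim x F
  -- span of q∘g0 over k is ⊤
  have hqg0 : ∀ i, q (g0 i) = Sum.elim (fun i => (bc i : V)) qF i := by
    rintro (i | j)
    · exact hx i
    · rfl
  have hspan_k : Submodule.span k (Set.range (q ∘ g0)) = ⊤ := by
    have : Set.range (q ∘ g0) = (fun i => (bc i : V)) '' Set.univ ∪ Set.range qF := by
      ext v
      constructor
      · rintro ⟨i, rfl⟩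
        rcases i with i | j
        · exact Or.inl ⟨i, trivial, (hqg0 (Sum.inl i)).symm⟩
        · exact Or.inr ⟨j, (hqg0 (Sum.inr j)).symm⟩
      · rintro (⟨i, -, rfl⟩ | ⟨j, rfl⟩)
        · exact ⟨Sum.inl i, hqg0 (Sum.inl i)⟩
        · exact ⟨Sum.inr j, hqg0 (Sum.inr j)⟩
    rw [this, Submodule.span_union]
    have h1 : Submodule.span k ((fun i => (bc i : V)) '' Set.univ) = Uc := by
      rw [Set.image_univ]
      have := bc.span_eq
      have h2 : Set.range (fun i => (bc i : V)) = Uc.subtype '' Set.range bc := by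
        rw [← Set.range_comp]; rfl
      rw [h2, ← Submodule.map_span, this, Submodule.map_top, Submodule.range_subtype]
    rw [h1]
    rw [sup_comm]
    exact hcompl.codisjoint.eq_top
  -- hence g0 spans M over R
  have hspanR : Submodule.span R (Set.range g0) = ⊤ := by
    rw [← IsLocalRing.map_mkQ_eq_top (R := R) (M := M)]
    rw [Submodule.map_span, ← Set.range_comp]
    exact MF.span_R_eq_top_of_span_k _ hspan_k
  -- cardinality count
  have b : Module.Basis (Module.Free.ChooseBasisIndex R M) R M := Module.Free.chooseBasis R M
  have hcard : Fintype.card (Fin c ⊕ Fin r) = Fintype.card (Module.Free.ChooseBasisIndex R M) := by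
    have h1 : Module.finrank k V = Fintype.card (Module.Free.ChooseBasisIndex R M) := by
      rw [Module.finrank_eq_card_basis (MF.quotBasis b)]
    have h2 : Module.finrank k U = r := by
      have := finrank_span_eq_card hF
      rwa [Fintype.card_fin] at this
    have h3 : Module.finrank k U + Module.finrank k Uc = Module.finrank k V :=
      Submodule.finrank_add_eq_of_isCompl hcompl
    simp only [Fintype.card_sum, Fintype.card_fin]
    omega
  -- Orzech: g0 is linearly independent
  have hind : LinearIndependent R g0 := by
    set T := Finsupp.linearCombination R g0
    have hT : Function.Surjective T := by
      rw [← LinearMap.range_eq_top, Finsupp.range_linearCombination, hspanR]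
    set e : M ≃ₗ[R] (Fin c ⊕ Fin r →₀ R) :=
      (b.reindex (Fintype.equivOfCardEq hcard.symm)).repr
    have hTe : Function.Surjective (T ∘ₗ (e : M →ₗ[R] (Fin c ⊕ Fin r →₀ R))) :=
      hT.comp e.surjective
    have hinj := OrzechProperty.injective_of_surjective_endomorphism
      (T ∘ₗ (e : M →ₗ[R] _)) hTe
    have : Function.Injective T := by
      intro a a' haa
      have : (T ∘ₗ (e : M →ₗ[R] _)) (e.symm a) = (T ∘ₗ (e : M →ₗ[R] _)) (e.symm a') := by
        simp only [LinearMap.comp_apply, LinearEquiv.coe_coe, LinearEquiv.apply_symm_apply]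
        exact haa
      have := hinj this
      exact e.symm.injective this
    exact this
  exact ⟨c, Module.Basis.mk hind hspanR.ge, fun j => Module.Basis.mk_apply hind hspanR.ge (Sum.inr j)⟩

/-- If the cokernel of `φ` admits coordinates valued in `R/(W)`, then the fiber
sequence is exact at `M`: `φ x ∈ 𝔪N` implies `x ∈ range ψ + 𝔪M`. -/
lemma MF.lemQ [Module.Free R M] {W : R} (hW : W ∈ nonZeroDivisors R)
    (φ : M →ₗ[R] N) (ψ : N →ₗ[R] M)
    (hψφ : ∀ x : M, ψ (φ x) = W • x)
    (hφψ : ∀ y : N, φ (ψ y) = W • y)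
    {n : ℕ} (θ : N →ₗ[R] (Fin n → R ⧸ Ideal.span {W}))
    (hker : LinearMap.ker θ = LinearMap.range φ)
    (hsurj : Function.Surjective θ) :
    ∀ x : M, φ x ∈ (𝔪 • ⊤ : Submodule R N) →
      x ∈ LinearMap.range ψ ⊔ (𝔪 • ⊤ : Submodule R M) := by
  classical
  -- pick preimages of the standard basis vectors
  choose v hv using fun i : Fin n => hsurj (Pi.single i (1 : R ⧸ Ideal.span {W}))
  set Vs : Submodule R N := Submodule.span R (Set.range v)
  -- K ⊔ Vs = ⊤
  have hsup : LinearMap.range φ ⊔ Vs = ⊤ := by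
    rw [eq_top_iff]
    intro w _
    choose rt hrt using fun i : Fin n => Ideal.Quotient.mk_surjective (I := Ideal.span {W}) (θ w i)
    set ρ : N := ∑ i, rt i • v i
    have hθρ : θ ρ = θ w := by
      funext j
      rw [map_sum, Finset.sum_apply]
      have : ∀ i, (θ (rt i • v i)) j = Pi.single (M := fun _ => R ⧸ Ideal.span {W}) i (θ w i) j := by
        intro i
        rw [map_smul, hv i]
        simp only [Pi.smul_apply]
        rcases eq_or_ne i j with rfl | hij
        · rw [Pi.single_eq_same, Pi.single_eq_same, ← hrt i,
            ← Ideal.Quotient.algebraMap_eq, Algebra.algebraMap_eq_smul_one]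
        · rw [Pi.single_eq_of_ne' hij, Pi.single_eq_of_ne' hij, smul_zero]
      rw [Finset.sum_congr rfl fun i _ => this i]
      rw [← Finset.sum_apply j Finset.univ (fun i => Pi.single (M := fun _ => R ⧸ Ideal.span {W}) i (θ w i))]
      rw [Finset.univ_sum_single (θ w)]
    have h1 : w - ρ ∈ LinearMap.range φ := by
      rw [← hker, LinearMap.mem_ker, map_sub, hθρ, sub_self]
    have h2 : ρ ∈ Vs := Submodule.sum_mem _ fun i _ =>
      Submodule.smul_mem _ _ (Submodule.subset_span ⟨i, rfl⟩)
    have : w = (w - ρ) + ρ := by abel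
    rw [this]
    exact Submodule.add_mem _ (Submodule.mem_sup_left h1) (Submodule.mem_sup_right h2)
  -- Step 1: K ∩ 𝔪N ≤ 𝔪K ⊔ (W)N
  have step1 : ∀ z : N, z ∈ LinearMap.range φ → z ∈ (𝔪 • ⊤ : Submodule R N) →
      z ∈ 𝔪 • LinearMap.range φ ⊔ (Ideal.span {W} : Ideal R) • (⊤ : Submodule R N) := by
    intro z hzK hzm
    have htop : (𝔪 • ⊤ : Submodule R N) = 𝔪 • LinearMap.range φ ⊔ 𝔪 • Vs := by
      rw [← Submodule.smul_sup, hsup]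
    rw [htop] at hzm
    obtain ⟨a, ha, s, hs, rfl⟩ := Submodule.mem_sup.mp hzm
    refine Submodule.add_mem _ (Submodule.mem_sup_left ha) ?_
    -- s = z - a ∈ K, and s ∈ 𝔪 • Vs; show s ∈ IW • ⊤
    have hsK : s ∈ LinearMap.range φ := by
      have : s = (a + s) - a := by abel
      rw [this]
      exact Submodule.sub_mem _ hzK (Submodule.smul_le_right (N := LinearMap.range φ) ha)
    have hsVs : s ∈ 𝔪 • Submodule.span R (Set.range v) := hs
    rw [Submodule.mem_ideal_smul_span_iff_exists_sum] at hsVs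
    obtain ⟨aa, haa, hsum⟩ := hsVs
    -- coefficients of s are in IW since θ s = 0
    have hθs : θ s = 0 := by rw [← LinearMap.mem_ker, hker]; exact hsK
    have hcoef : ∀ i, aa i ∈ Ideal.span {W} := by
      intro i
      have h0 : θ s i = Ideal.Quotient.mk (Ideal.span {W}) (aa i) := by
        rw [← hsum, map_finsuppSum, Finsupp.sum, Finset.sum_apply]
        have hterm : ∀ j, (θ (aa j • v j)) i = Pi.single (M := fun _ => R ⧸ Ideal.span {W}) j
            (Ideal.Quotient.mk (Ideal.span {W}) (aa j)) i := by
          intro j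
          rw [map_smul, hv j]
          simp only [Pi.smul_apply]
          rcases eq_or_ne j i with rfl | hij
          · rw [Pi.single_eq_same, Pi.single_eq_same,
              ← Ideal.Quotient.algebraMap_eq, Algebra.algebraMap_eq_smul_one]
          · rw [Pi.single_eq_of_ne (Ne.symm hij), Pi.single_eq_of_ne (Ne.symm hij), smul_zero]
        rw [Finset.sum_congr rfl fun j _ => hterm j]
        by_cases hi : i ∈ aa.support
        · rw [Finset.sum_eq_single i]
          · rw [Pi.single_eq_same]
          · intro j _ hji; rw [Pi.single_eq_of_ne (Ne.symm hji)]
          · intro h; exact absurd hi h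
        · rw [Finset.sum_eq_zero, Finsupp.notMem_support_iff.mp hi, map_zero]
          intro j hj
          rcases eq_or_ne j i with rfl | hji
          · exact absurd hj hi
          · rw [Pi.single_eq_of_ne (Ne.symm hji)]
      have h1 := congrFun hθs i
      rw [h0] at h1
      simp only [Pi.zero_apply] at h1
      exact (Submodule.Quotient.mk_eq_zero _).mp h1
    rw [← hsum]
    apply Submodule.mem_sup_right
    apply Submodule.sum_mem
    intro j _
    exact Submodule.smul_mem_smul (hcoef j) trivial
  -- conclude
  intro x hx
  have hφx : φ x ∈ 𝔪 • LinearMap.range φ ⊔ (Ideal.span {W} : Ideal R) • (⊤ : Submodule R N) :=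
    step1 (φ x) (LinearMap.mem_range_self φ x) hx
  obtain ⟨a, ha, b, hb, hab⟩ := Submodule.mem_sup.mp hφx
  have ha' : a ∈ Submodule.map φ (𝔪 • ⊤ : Submodule R M) := by
    rw [Submodule.map_smul'', Submodule.map_top]
    exact ha
  obtain ⟨z, hz, hza⟩ := ha'
  obtain ⟨u, rfl⟩ := MF.mem_spanW_smul_top W hb
  have key : φ (x - z - ψ u) = 0 := by
    rw [map_sub, map_sub, hφψ, hza, ← hab]
    abel
  have hinj : Function.Injective φ := by
    intro t t' htt
    have : W • t = W • t' := by rw [← hψφ, ← hψφ, htt]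
    exact MF.smul_injective_of_free hW this
  have : x - z - ψ u = 0 := by
    apply hinj
    rw [key, map_zero]
  have hxz : x = z + ψ u := by
    rwa [sub_sub, sub_eq_zero] at this
  rw [hxz]
  exact Submodule.add_mem _ (Submodule.mem_sup_right hz)
    (Submodule.mem_sup_left (LinearMap.mem_range_self ψ u))

lemma MF.transl {W : R} (hWm : W ∈ 𝔪)
    (φ : M →ₗ[R] N) (ψ : N →ₗ[R] M)
    (hφψ : ∀ y : N, φ (ψ y) = W • y)
    (d : (M ⧸ (𝔪 • ⊤ : Submodule R M)) →ₗ[R] (N ⧸ (𝔪 • ⊤ : Submodule R N)))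
    (hd : d ∘ₗ (𝔪 • ⊤ : Submodule R M).mkQ = (𝔪 • ⊤ : Submodule R N).mkQ ∘ₗ φ)
    (d' : (N ⧸ (𝔪 • ⊤ : Submodule R N)) →ₗ[R] (M ⧸ (𝔪 • ⊤ : Submodule R M)))
    (hd' : d' ∘ₗ (𝔪 • ⊤ : Submodule R N).mkQ = (𝔪 • ⊤ : Submodule R M).mkQ ∘ₗ ψ) :
    (LinearMap.ker d = LinearMap.range d') ↔
      (∀ x : M, φ x ∈ (𝔪 • ⊤ : Submodule R N) →
        x ∈ LinearMap.range ψ ⊔ (𝔪 • ⊤ : Submodule R M)) := by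
  have hker : Submodule.comap (𝔪 • ⊤ : Submodule R M).mkQ (LinearMap.ker d)
      = Submodule.comap φ (𝔪 • ⊤ : Submodule R N) := by
    rw [← LinearMap.ker_comp, hd, LinearMap.ker_comp, Submodule.ker_mkQ]
  have hrange : Submodule.comap (𝔪 • ⊤ : Submodule R M).mkQ (LinearMap.range d')
      = LinearMap.range ψ ⊔ (𝔪 • ⊤ : Submodule R M) := by
    have h1 : LinearMap.range d' = Submodule.map (𝔪 • ⊤ : Submodule R M).mkQ
        (LinearMap.range ψ) := by
      have h2 : LinearMap.range d' = LinearMap.range (d' ∘ₗ (𝔪 • ⊤ : Submodule R N).mkQ) := by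
        rw [LinearMap.range_comp, Submodule.range_mkQ, Submodule.map_top]
      rw [h2, hd', LinearMap.range_comp]
    rw [h1, Submodule.comap_map_eq, Submodule.ker_mkQ]
  constructor
  · intro h x hx
    have : x ∈ Submodule.comap (𝔪 • ⊤ : Submodule R M).mkQ (LinearMap.ker d) := by
      rw [hker]; exact hx
    rw [h, hrange] at this
    exact this
  · intro h
    apply Submodule.comap_injective_of_surjective (Submodule.mkQ_surjective _)
    rw [hker, hrange]
    apply le_antisymm
    · exact h
    · apply sup_le
      · rintro _ ⟨y, rfl⟩
        rw [Submodule.mem_comap, hφψ]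
        exact Submodule.smul_mem_smul hWm trivial
      · intro x hx
        rw [Submodule.mem_comap]
        have : φ x ∈ Submodule.map φ (𝔪 • ⊤ : Submodule R M) := ⟨x, hx, rfl⟩
        rw [Submodule.map_smul''] at this
        exact smul_mono_right _ (le_top (a := Submodule.map φ ⊤)) this


end MFlocal

noncomputable section MFnoeth

variable {R : Type} [CommRing R] [IsLocalRing R] [IsNoetherianRing R]

local notation "𝔪" => maximalIdeal R
local notation "k" => R ⧸ maximalIdeal R

variable {M N : Type} [AddCommGroup M] [Module R M] [AddCommGroup N] [Module R N]

lemma MF.helper3 {W : R} {z : R} (hz : z ∈ (𝔪 : Ideal R) • ((Ideal.span {W} : Ideal R) : Submodule R R)) :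
    ∃ b ∈ (𝔪 : Ideal R), z = W * b := by
  refine Submodule.smul_induction_on hz ?_ ?_
  · intro a ha w hw
    obtain ⟨t, rfl⟩ := Ideal.mem_span_singleton'.mp hw
    exact ⟨a * t, Ideal.mul_mem_right t 𝔪 ha, by ring_nf⟩
  · rintro x y ⟨b1, hb1, rfl⟩ ⟨b2, hb2, rfl⟩
    exact ⟨b1 + b2, Ideal.add_mem _ hb1 hb2, by ring⟩


lemma MF.lemD [Module.Finite R M] [Module.Free R M] [Module.Finite R N] [Module.Free R N]
    {W : R} (hW : W ∈ nonZeroDivisors R)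
    (φ : M →ₗ[R] N) (ψ : N →ₗ[R] M)
    (hψφ : ∀ x : M, ψ (φ x) = W • x) (hφψ : ∀ y : N, φ (ψ y) = W • y)
    {c r : ℕ} (g : Module.Basis (Fin c ⊕ Fin r) R N)
    (hgK : LinearMap.range φ = Submodule.span R (Set.range (fun j => g (Sum.inr j)))
        ⊔ (Ideal.span {W} : Ideal R) • (⊤ : Submodule R N)) :
    ∃ (c' r' : ℕ) (g' : Module.Basis (Fin c' ⊕ Fin r') R M),
      LinearMap.range ψ = Submodule.span R (Set.range (fun j => g' (Sum.inr j)))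
        ⊔ (Ideal.span {W} : Ideal R) • (⊤ : Submodule R M) := by
  classical
  set F : Fin c → M := fun i => ψ (g (Sum.inl i)) with hF
  -- independence of the images of F in M/𝔪M
  have hind : LinearIndependent k
      (fun i => (Submodule.Quotient.mk (F i) : M ⧸ (𝔪 • ⊤ : Submodule R M))) := by
    rw [linearIndependent_iff']
    intro s cc hcc j hj
    choose rr hrr using fun i : Fin c => Ideal.Quotient.mk_surjective (I := 𝔪) (cc i)
    set y : N := ∑ i ∈ s, rr i • g (Sum.inl i) with hy
    have hψy : ψ y ∈ (𝔪 • ⊤ : Submodule R M) := by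
      rw [← Submodule.Quotient.mk_eq_zero]
      have hmk : (Submodule.Quotient.mk (ψ y) : M ⧸ (𝔪 • ⊤ : Submodule R M))
          = ∑ i ∈ s, cc i • Submodule.Quotient.mk (F i) := by
        rw [hy, map_sum, ← Submodule.mkQ_apply, map_sum]
        refine Finset.sum_congr rfl fun i _ => ?_
        rw [map_smul, map_smul, Submodule.mkQ_apply, ← hrr i, ← Ideal.Quotient.algebraMap_eq,
          algebraMap_smul]
      rw [hmk, hcc]
    -- push into N via φ
    have hWy : W • y ∈ 𝔪 • LinearMap.range φ := by
      have h1 : φ (ψ y) ∈ Submodule.map φ (𝔪 • ⊤ : Submodule R M) := ⟨ψ y, hψy, rfl⟩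
      rw [Submodule.map_smul'', Submodule.map_top] at h1
      rwa [hφψ] at h1
    -- look at the (inl j) coordinate
    set ℓ : N →ₗ[R] R := g.coord (Sum.inl j) with hℓ
    have hcoordK : Submodule.map ℓ (LinearMap.range φ)
        ≤ ((Ideal.span {W} : Ideal R) : Submodule R R) := by
      rw [hgK, Submodule.map_sup]
      apply sup_le
      · rw [Submodule.map_span, Submodule.span_le]
        rintro w ⟨w', ⟨i, rfl⟩, rfl⟩
        have : ℓ (g (Sum.inr i)) = 0 := by
          rw [hℓ, Module.Basis.coord_apply, Module.Basis.repr_self, Finsupp.single_apply]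
          simp
        rw [this]
        exact (Ideal.span {W}).zero_mem
      · rw [Submodule.map_smul'']
        refine le_trans (smul_mono_right _ (le_top (a := Submodule.map ℓ ⊤))) ?_
        rw [Submodule.smul_le]
        intro w hw v _
        rw [smul_eq_mul]
        exact Ideal.mul_mem_right v _ hw
    have hcoord : ℓ (W • y) ∈ (𝔪 : Ideal R) • ((Ideal.span {W} : Ideal R) : Submodule R R) := by
      have h1 : ℓ (W • y) ∈ Submodule.map ℓ (𝔪 • LinearMap.range φ) := ⟨W • y, hWy, rfl⟩
      rw [Submodule.map_smul''] at h1
      exact smul_mono_right _ hcoordK h1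
    obtain ⟨b, hb, hWb⟩ := MF.helper3 hcoord
    have hℓy : ℓ y = rr j := by
      rw [hℓ, hy, Module.Basis.coord_apply, map_sum, Finsupp.finset_sum_apply]
      rw [Finset.sum_eq_single j]
      · simp
      · intro i _ hij
        simp [Module.Basis.repr_self, Finsupp.single_apply, hij]
      · intro h; exact absurd hj h
    have hWrj : W * rr j = W * b := by
      rw [← hWb, map_smul, smul_eq_mul, hℓy]
    have hrj : rr j = b := by
      have h4 : (rr j - b) * W = 0 := by
        rw [sub_mul, mul_comm (rr j) W, hWrj, mul_comm, sub_self]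
      exact sub_eq_zero.mp (hW.2 _ h4)
    rw [← hrr j, hrj, Ideal.Quotient.eq_zero_iff_mem]
    exact hb
  obtain ⟨c', g', hg'⟩ := MF.exists_basis_extension F hind
  refine ⟨c', c, g', ?_⟩
  have hrange : (Set.range fun j => g' (Sum.inr j)) = Set.range F := by
    ext w
    constructor
    · rintro ⟨j, rfl⟩; exact ⟨j, (hg' j).symm⟩
    · rintro ⟨j, rfl⟩; exact ⟨j, hg' j⟩
  rw [hrange]
  apply le_antisymm
  · -- range ψ ≤ span F ⊔ (W)M
    rintro _ ⟨v, rfl⟩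
    have hv := g.sum_repr v
    rw [Fintype.sum_sum_type] at hv
    have hsplit : ψ v = ψ (∑ i, g.repr v (Sum.inl i) • g (Sum.inl i))
        + ψ (∑ j, g.repr v (Sum.inr j) • g (Sum.inr j)) := by
      rw [← map_add, hv]
    rw [hsplit]
    apply Submodule.add_mem
    · apply Submodule.mem_sup_left
      rw [map_sum]
      apply Submodule.sum_mem
      intro i _
      rw [map_smul]
      exact Submodule.smul_mem _ _ (Submodule.subset_span ⟨i, rfl⟩)
    · apply Submodule.mem_sup_right
      have hK : (∑ j, g.repr v (Sum.inr j) • g (Sum.inr j)) ∈ LinearMap.range φ := by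
        rw [hgK]
        apply Submodule.mem_sup_left
        exact Submodule.sum_mem _ fun j _ => Submodule.smul_mem _ _
          (Submodule.subset_span ⟨j, rfl⟩)
      obtain ⟨t, ht⟩ := hK
      rw [← ht, hψφ]
      exact Submodule.smul_mem_smul (Ideal.mem_span_singleton_self W) trivial
  · apply sup_le
    · rw [Submodule.span_le]
      rintro w ⟨i, rfl⟩
      exact LinearMap.mem_range_self ψ _
    · rw [Submodule.smul_le]
      intro w hw v _
      obtain ⟨t, rfl⟩ := Ideal.mem_span_singleton'.mp hw
      rw [mul_smul, ← hψφ]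
      exact (LinearMap.range ψ).smul_mem t (LinearMap.mem_range_self ψ (φ v))

lemma MF.lemC [Module.Finite R M] [Module.Free R M] [Module.Finite R N] [Module.Free R N]
    {W : R} (hWm : W ∈ 𝔪) (φ : M →ₗ[R] N) (ψ : N →ₗ[R] M)
    (hφψ : ∀ y : N, φ (ψ y) = W • y)
    (hc : ∀ x : M, φ x ∈ (𝔪 • ⊤ : Submodule R N) →
      x ∈ LinearMap.range ψ ⊔ (𝔪 • ⊤ : Submodule R M)) :
    ∃ (c r : ℕ) (g : Module.Basis (Fin c ⊕ Fin r) R N),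
      LinearMap.range φ = Submodule.span R (Set.range (fun j => g (Sum.inr j)))
        ⊔ (Ideal.span {W} : Ideal R) • (⊤ : Submodule R N) := by
  classical
  set K := LinearMap.range φ with hK
  set qN := (𝔪 • ⊤ : Submodule R N).mkQ with hqN
  set KV : Submodule R (N ⧸ (𝔪 • ⊤ : Submodule R N)) := Submodule.map qN K with hKV
  haveI : Module.Finite R (N ⧸ (𝔪 • ⊤ : Submodule R N)) := Module.Finite.quotient R _
  haveI : Module.Finite k (N ⧸ (𝔪 • ⊤ : Submodule R N)) :=
    Module.Finite.of_restrictScalars_finite R k _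
  -- KV as a k-submodule
  set U : Submodule k (N ⧸ (𝔪 • ⊤ : Submodule R N)) :=
    { carrier := (KV : Set (N ⧸ (𝔪 • ⊤ : Submodule R N)))
      add_mem' := fun h1 h2 => KV.add_mem h1 h2
      zero_mem' := KV.zero_mem
      smul_mem' := by
        intro c v hv
        obtain ⟨rr, rfl⟩ := Ideal.Quotient.mk_surjective (I := 𝔪) c
        have : (Ideal.Quotient.mk 𝔪 rr) • v = rr • v := by
          rw [← algebraMap_smul (R ⧸ 𝔪) rr v]; rfl
        rw [SetLike.mem_coe] at hv ⊢
        rw [this]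
        exact KV.smul_mem rr hv } with hU
  set bU := Module.finBasis k U with hbU
  have hbUmem : ∀ j, (bU j : N ⧸ (𝔪 • ⊤ : Submodule R N)) ∈ KV := fun j => (bU j).2
  choose F hFK hqF using fun j => Submodule.mem_map.mp (hbUmem j)
  -- independence of images of F
  have hFind : LinearIndependent k
      (fun j => (Submodule.Quotient.mk (F j) : N ⧸ (𝔪 • ⊤ : Submodule R N))) := by
    have h1 : (fun j => (Submodule.Quotient.mk (F j) : N ⧸ (𝔪 • ⊤ : Submodule R N)))
        = fun j => (bU j : N ⧸ (𝔪 • ⊤ : Submodule R N)) := by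
      funext j
      rw [← hqF j]
      rfl
    rw [h1]
    exact bU.linearIndependent.map' U.subtype (Submodule.ker_subtype _)
  obtain ⟨c, g, hg⟩ := MF.exists_basis_extension F hFind
  refine ⟨c, _, g, ?_⟩
  have hrange : (Set.range (fun j => g (Sum.inr j))) = Set.range F := by
    ext w
    constructor
    · rintro ⟨j, rfl⟩; exact ⟨j, (hg j).symm⟩
    · rintro ⟨j, rfl⟩; exact ⟨j, hg j⟩
  rw [hrange]
  set IW : Ideal R := Ideal.span {W} with hIW
  apply le_antisymm
  · -- K ≤ span F ⊔ IW•⊤ via Nakayama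
    have hKfg : K.FG := IsNoetherian.noetherian K
    have hjac : 𝔪 ≤ Ideal.jacobson ⊥ :=
      (IsLocalRing.jacobson_eq_maximalIdeal (⊥ : Ideal R) bot_ne_top).ge
    refine Submodule.le_of_le_smul_of_le_jacobson_bot hKfg hjac ?_
    intro x hxK
    -- express qN x via the basis of U
    have hqx : qN x ∈ KV := ⟨x, hxK, rfl⟩
    set u : U := ⟨qN x, hqx⟩ with hu
    have hsum := bU.sum_repr u
    have hsum0 := congrArg (Subtype.val) hsum
    simp only [Submodule.coe_sum, SetLike.val_smul] at hsum0
    have hsum' : qN x = ∑ j, bU.repr u j • (bU j : N ⧸ (𝔪 • ⊤ : Submodule R N)) :=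
      Eq.symm hsum0
    choose rr hrr using fun j => Ideal.Quotient.mk_surjective (I := 𝔪) (bU.repr u j)
    have hsum'' : qN x = qN (∑ j, rr j • F j) := by
      rw [map_sum, hsum']
      refine Finset.sum_congr rfl fun j _ => ?_
      rw [map_smul, ← hqF j, ← hrr j, ← Ideal.Quotient.algebraMap_eq]
      exact algebraMap_smul _ _ _
    have hdiff : x - ∑ j, rr j • F j ∈ (𝔪 • ⊤ : Submodule R N) := by
      have h5 := hsum''
      rw [hqN, Submodule.mkQ_apply, Submodule.mkQ_apply] at h5
      exact (Submodule.Quotient.eq _).mp h5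
    have hdiffK : x - ∑ j, rr j • F j ∈ K :=
      Submodule.sub_mem _ hxK (Submodule.sum_mem _ fun j _ => Submodule.smul_mem _ _ (hFK j))
    -- use the exactness hypothesis
    obtain ⟨y, hy⟩ := hdiffK
    obtain ⟨yz, hyz, w', hw', hyw⟩ := Submodule.mem_sup.mp (hc y (by rw [hy]; exact hdiff))
    obtain ⟨z, rfl⟩ := hyz
    have hφy : φ y = W • z + φ w' := by rw [← hyw, map_add, hφψ]
    have hx : x = (∑ j, rr j • F j) + φ y := by rw [hy]; abel
    have hφw' : φ w' ∈ 𝔪 • K := by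
      have : φ w' ∈ Submodule.map φ (𝔪 • ⊤ : Submodule R M) := ⟨w', hw', rfl⟩
      rwa [Submodule.map_smul'', Submodule.map_top] at this
    rw [hx, hφy]
    refine Submodule.add_mem _ ?_ (Submodule.add_mem _ ?_ ?_)
    · exact Submodule.mem_sup_left (Submodule.mem_sup_left
        (Submodule.sum_mem _ fun j _ => Submodule.smul_mem _ _
          (Submodule.subset_span ⟨j, rfl⟩)))
    · exact Submodule.mem_sup_left (Submodule.mem_sup_right
        (Submodule.smul_mem_smul (Ideal.mem_span_singleton_self W) trivial))
    · exact Submodule.mem_sup_right hφw'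
  · -- span F ⊔ IW•⊤ ≤ K
    apply sup_le
    · rw [Submodule.span_le]
      rintro w ⟨j, rfl⟩
      exact hFK j
    · rw [Submodule.smul_le]
      intro w hw v _
      obtain ⟨t, rfl⟩ := Ideal.mem_span_singleton'.mp hw
      rw [mul_smul, ← hφψ]
      exact K.smul_mem t (LinearMap.mem_range_self φ (ψ v))

end MFnoeth

/-- Let `(R, m, k)` be a commutative Noetherian local ring, `W ∈ m` a non-zero-divisor,
and `(E₀, E₁, δ₀, δ₁)` a matrix factorization of `W` with `E₀`, `E₁` finite free.
Let `d₁ : E₁/mE₁ → E₀/mE₀` and `d₀ : E₀/mE₀ → E₁/mE₁` be the maps induced by `δ₁`, `δ₀`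
on the fibers at the closed point. Then the following are equivalent:
(a) `coker δ₁` is a free `R/(W)`-module (being finitely generated, this means it is
isomorphic to some `(R/(W))ⁿ`);
(b) the fiber sequence is exact at `E₀ ⊗ k`, i.e. `ker d₀ = range d₁`;
(c) the fiber sequence is exact at `E₁ ⊗ k`, i.e. `ker d₁ = range d₀`. -/
theorem stmt_10 {R : Type} [CommRing R] [IsNoetherianRing R] [IsLocalRing R]
    (W : R) (hWm : W ∈ maximalIdeal R) (hW : W ∈ nonZeroDivisors R)
    (E₀ E₁ : Type) [AddCommGroup E₀] [Module R E₀] [AddCommGroup E₁] [Module R E₁]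
    [Module.Finite R E₀] [Module.Free R E₀] [Module.Finite R E₁] [Module.Free R E₁]
    (δ₁ : E₁ →ₗ[R] E₀) (δ₀ : E₀ →ₗ[R] E₁)
    (h01 : δ₀ ∘ₗ δ₁ = W • (LinearMap.id : E₁ →ₗ[R] E₁))
    (h10 : δ₁ ∘ₗ δ₀ = W • (LinearMap.id : E₀ →ₗ[R] E₀))
    (d₁ : (E₁ ⧸ (maximalIdeal R • ⊤ : Submodule R E₁))
        →ₗ[R] (E₀ ⧸ (maximalIdeal R • ⊤ : Submodule R E₀)))
    (d₀ : (E₀ ⧸ (maximalIdeal R • ⊤ : Submodule R E₀))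
        →ₗ[R] (E₁ ⧸ (maximalIdeal R • ⊤ : Submodule R E₁)))
    (hd₁ : d₁ ∘ₗ (maximalIdeal R • ⊤ : Submodule R E₁).mkQ
        = (maximalIdeal R • ⊤ : Submodule R E₀).mkQ ∘ₗ δ₁)
    (hd₀ : d₀ ∘ₗ (maximalIdeal R • ⊤ : Submodule R E₀).mkQ
        = (maximalIdeal R • ⊤ : Submodule R E₁).mkQ ∘ₗ δ₀) :
    ((∃ n : ℕ, Nonempty ((E₀ ⧸ LinearMap.range δ₁)
        ≃ₗ[R] (Fin n → R ⧸ Ideal.span {W})))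
      ↔ LinearMap.ker d₀ = LinearMap.range d₁) ∧
    ((∃ n : ℕ, Nonempty ((E₀ ⧸ LinearMap.range δ₁)
        ≃ₗ[R] (Fin n → R ⧸ Ideal.span {W})))
      ↔ LinearMap.ker d₁ = LinearMap.range d₀) := by
  have hψφ : ∀ x : E₁, δ₀ (δ₁ x) = W • x := fun x => by
    have := LinearMap.congr_fun h01 x
    simpa using this
  have hφψ : ∀ y : E₀, δ₁ (δ₀ y) = W • y := fun y => by
    have := LinearMap.congr_fun h10 y
    simpa using this
  -- translations of the two fiber-exactness conditions into elementwise form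
  have tc := MF.transl hWm δ₁ δ₀ hφψ d₁ hd₁ d₀ hd₀
  have tb := MF.transl hWm δ₀ δ₁ hψφ d₀ hd₀ d₁ hd₁
  -- the chain of implications
  have hPA_to_Cc : (∃ n : ℕ, Nonempty ((E₀ ⧸ LinearMap.range δ₁)
        ≃ₗ[R] (Fin n → R ⧸ Ideal.span {W}))) →
      (∀ x : E₁, δ₁ x ∈ (maximalIdeal R • ⊤ : Submodule R E₀) →
        x ∈ LinearMap.range δ₀ ⊔ (maximalIdeal R • ⊤ : Submodule R E₁)) := by
    rintro ⟨n, ⟨e⟩⟩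
    obtain ⟨θ, hk, hs⟩ := MF.theta_of_iso δ₁ e
    exact MF.lemQ hW δ₁ δ₀ hψφ hφψ θ hk hs
  have hPA'_to_Cb : (∃ n : ℕ, Nonempty ((E₁ ⧸ LinearMap.range δ₀)
        ≃ₗ[R] (Fin n → R ⧸ Ideal.span {W}))) →
      (∀ x : E₀, δ₀ x ∈ (maximalIdeal R • ⊤ : Submodule R E₁) →
        x ∈ LinearMap.range δ₁ ⊔ (maximalIdeal R • ⊤ : Submodule R E₀)) := by
    rintro ⟨n, ⟨e⟩⟩
    obtain ⟨θ, hk, hs⟩ := MF.theta_of_iso δ₀ e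
    exact MF.lemQ hW δ₀ δ₁ hφψ hψφ θ hk hs
  have hbK_to_PA : (∃ (c r : ℕ) (g : Module.Basis (Fin c ⊕ Fin r) R E₀),
      LinearMap.range δ₁ = Submodule.span R (Set.range (fun j => g (Sum.inr j)))
        ⊔ (Ideal.span {W} : Ideal R) • (⊤ : Submodule R E₀)) →
      (∃ n : ℕ, Nonempty ((E₀ ⧸ LinearMap.range δ₁)
        ≃ₗ[R] (Fin n → R ⧸ Ideal.span {W}))) := by
    rintro ⟨c, r, g, hgK⟩
    obtain ⟨e⟩ := MF.quot_adapted_basis W g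
    exact ⟨c, ⟨(Submodule.quotEquivOfEq _ _ hgK).trans e⟩⟩
  have hbL_to_PA' : (∃ (c r : ℕ) (g : Module.Basis (Fin c ⊕ Fin r) R E₁),
      LinearMap.range δ₀ = Submodule.span R (Set.range (fun j => g (Sum.inr j)))
        ⊔ (Ideal.span {W} : Ideal R) • (⊤ : Submodule R E₁)) →
      (∃ n : ℕ, Nonempty ((E₁ ⧸ LinearMap.range δ₀)
        ≃ₗ[R] (Fin n → R ⧸ Ideal.span {W}))) := by
    rintro ⟨c, r, g, hgL⟩
    obtain ⟨e⟩ := MF.quot_adapted_basis W g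
    exact ⟨c, ⟨(Submodule.quotEquivOfEq _ _ hgL).trans e⟩⟩
  have hCc_to_bK := MF.lemC hWm δ₁ δ₀ hφψ
  have hCb_to_bL := MF.lemC hWm δ₀ δ₁ hψφ
  have hbK_to_bL : (∃ (c r : ℕ) (g : Module.Basis (Fin c ⊕ Fin r) R E₀),
      LinearMap.range δ₁ = Submodule.span R (Set.range (fun j => g (Sum.inr j)))
        ⊔ (Ideal.span {W} : Ideal R) • (⊤ : Submodule R E₀)) →
      (∃ (c r : ℕ) (g : Module.Basis (Fin c ⊕ Fin r) R E₁),
      LinearMap.range δ₀ = Submodule.span R (Set.range (fun j => g (Sum.inr j)))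
        ⊔ (Ideal.span {W} : Ideal R) • (⊤ : Submodule R E₁)) := by
    rintro ⟨c, r, g, hg⟩
    exact MF.lemD hW δ₁ δ₀ hψφ hφψ g hg
  have hbL_to_bK : (∃ (c r : ℕ) (g : Module.Basis (Fin c ⊕ Fin r) R E₁),
      LinearMap.range δ₀ = Submodule.span R (Set.range (fun j => g (Sum.inr j)))
        ⊔ (Ideal.span {W} : Ideal R) • (⊤ : Submodule R E₁)) →
      (∃ (c r : ℕ) (g : Module.Basis (Fin c ⊕ Fin r) R E₀),
      LinearMap.range δ₁ = Submodule.span R (Set.range (fun j => g (Sum.inr j)))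
        ⊔ (Ideal.span {W} : Ideal R) • (⊤ : Submodule R E₀)) := by
    rintro ⟨c, r, g, hg⟩
    exact MF.lemD hW δ₀ δ₁ hφψ hψφ g hg
  constructor
  · constructor
    · intro hA
      exact tb.mpr (hPA'_to_Cb (hbL_to_PA' (hbK_to_bL (hCc_to_bK (hPA_to_Cc hA)))))
    · intro hb
      exact hbK_to_PA (hbL_to_bK (hCb_to_bL (tb.mp hb)))
  · constructor
    · intro hA
      exact tc.mpr (hPA_to_Cc hA)
    · intro hc
      exact hbK_to_PA (hCc_to_bK (tc.mp hc))
end
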